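/- arXiv:2009.12290 — 3 statements merged into one kernel-verified Lean document; each statement's English description precedes it below -/
import Mathlib

section
/- Let A be an n×n irreducible completely positive matrix whose graph is exactly the n-cycle, n ≥ 4. Then A has at most two minimal CP factorizations. -/
open Matrix

/-- A CP representation of `A`: a multiset of nonnegative, nonzero, pairwise linearly
independent vectors whose rank-one outer products sum to `A`. Counted as a multiset,
i.e. up to reordering of the summands (columns). -/
def IsCPRep {n : ℕ} (A : Matrix (Fin n) (Fin n) ℝ) (L : Multiset (Fin n → ℝ)) : Prop :=
  (∀ b ∈ L, ∀ i, 0 ≤ b i) ∧ (∀ b ∈ L, b ≠ 0) ∧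
  L.Pairwise (fun b c => LinearIndependent ℝ ![b, c]) ∧
  (L.map fun b => vecMulVec b b).sum = A

/-- `A` is completely positive. -/
def IsCP {n : ℕ} (A : Matrix (Fin n) (Fin n) ℝ) : Prop := ∃ L, IsCPRep A L

/-- The cp-rank: minimal number of rank-one summands in a CP representation. -/
noncomputable def cpRank {n : ℕ} (A : Matrix (Fin n) (Fin n) ℝ) : ℕ :=
  sInf {k | ∃ L, IsCPRep A L ∧ Multiset.card L = k}

/-- A minimal CP representation: a CP representation with `cpRank A` summands. -/
def IsMinCPRep {n : ℕ} (A : Matrix (Fin n) (Fin n) ℝ) (L : Multiset (Fin n → ℝ)) : Prop :=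
  IsCPRep A L ∧ Multiset.card L = cpRank A

/-- The graph of a symmetric matrix: `i ~ j` iff `i ≠ j` and `A i j ≠ 0`. -/
def matGraph {n : ℕ} (A : Matrix (Fin n) (Fin n) ℝ) : SimpleGraph (Fin n) where
  Adj i j := i ≠ j ∧ (A i j ≠ 0 ∨ A j i ≠ 0)
  symm := ⟨fun _ _ h => ⟨h.1.symm, h.2.symm⟩⟩
  loopless := ⟨fun _ h => h.1 rfl⟩

/-- The comparison matrix `M(A)`. -/
noncomputable def compMatrix {n : ℕ} (A : Matrix (Fin n) (Fin n) ℝ) : Matrix (Fin n) (Fin n) ℝ :=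
  fun i j => if i = j then |A i j| else -|A i j|

/-!
Each vector of a CP factorization of `A` is supported on a clique of the graph of `A`; for the
`n`-cycle with `n ≥ 4` that is a vertex or an edge, and every edge `{i, i + 1}` needs a vector
of its own. A factorization with `n` vectors thus has exactly one vector `(p i, q i)` on each
edge, with `p i * q i = a (i, i + 1)` and `p (i + 1) ^ 2 + q i ^ 2 = a (i + 1, i + 1)`. So
`t i = p i ^ 2` follows the recursion `t (i + 1) = a (i + 1, i + 1) - a (i, i + 1) ^ 2 / t i`,
and the factorization is determined by `t 0`, a positive point whose orbit closes after `n` steps.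

The product `t 0 * ⋯ * t k` is an affine function of `t 0` (a continuant), so these points are
roots of a polynomial of degree at most two. It is not zero: for large `t 0` the orbit stays
positive and `t n ≤ a (0, 0) < t 0`. Hence there are at most two minimal factorizations.

That the cp-rank is `n` comes from the same recursion: for an arbitrary factorization, the sums
of `b i ^ 2` over the vectors `b` covering the edge `{i, i + 1}` form, by Cauchy–Schwarz, a
positive subsolution, and the intermediate value theorem yields a closed orbit above it.
-/

open Finset Polynomial

lemma Multiset.exists_pair_of_card_le_two {α : Type*} {s : Multiset α} (hs : s.card ≤ 2) (a : α) :
    ∃ x y, ∀ z ∈ s, z = x ∨ z = y := by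
  induction s using Quot.ind with
  | mk l =>
    match l, hs with
    | [], _ => exact ⟨a, a, by simp⟩
    | [x], _ => exact ⟨x, x, by simp⟩
    | [x, y], _ => exact ⟨x, y, by simp⟩
    | _ :: _ :: _ :: _, hs => simp at hs

lemma linearIndependent_fin2_of_apply {ι : Type*} {u v : ι → ℝ} (m : ι) (hu : u m ≠ 0)
    (hv : v m = 0) (hv₀ : v ≠ 0) : LinearIndependent ℝ ![u, v] := by
  refine linearIndependent_fin2.2 ⟨by simpa using hv₀, fun r hr => hu ?_⟩
  simpa [hv] using (congrFun hr m).symm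

noncomputable def orbit (a c : ℕ → ℝ) (x : ℝ) : ℕ → ℝ
  | 0 => x
  | k + 1 => a (k + 1) - c k / orbit a c x k

def IsSubOrbit (a c t : ℕ → ℝ) : Prop :=
  (∀ k, 0 < t k) ∧ ∀ k, t (k + 1) ≤ a (k + 1) - c k / t k

section Orbit

variable {a c t : ℕ → ℝ} {x : ℝ} {n : ℕ}

@[simp] lemma orbit_zero : orbit a c x 0 = x := rfl

lemma orbit_succ (k : ℕ) : orbit a c x (k + 1) = a (k + 1) - c k / orbit a c x k := rfl

lemma orbit_eq_of_forall (ht : ∀ k, t (k + 1) = a (k + 1) - c k / t k) : orbit a c (t 0) = t := by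
  funext k
  induction k with
  | zero => rfl
  | succ k ih => rw [orbit_succ, ih, ht]

lemma isSubOrbit_orbit (hx : ∀ k, 0 < orbit a c x k) : IsSubOrbit a c (orbit a c x) :=
  ⟨hx, fun _ => le_rfl⟩

lemma IsSubOrbit.le_orbit (hc : ∀ k, 0 ≤ c k) (ht : IsSubOrbit a c t) (hx : t 0 ≤ x) (k : ℕ) :
    t k ≤ orbit a c x k := by
  induction k with
  | zero => exact hx
  | succ k ih =>
    calc t (k + 1) ≤ a (k + 1) - c k / t k := ht.2 k
      _ ≤ orbit a c x (k + 1) := by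
        rw [orbit_succ]
        gcongr
        · exact hc k
        · exact ht.1 k

lemma IsSubOrbit.orbit_pos (hc : ∀ k, 0 ≤ c k) (ht : IsSubOrbit a c t) (hx : t 0 ≤ x) (k : ℕ) :
    0 < orbit a c x k :=
  (ht.1 k).trans_le (ht.le_orbit hc hx k)

lemma Function.Periodic.orbit (ha : Function.Periodic a n) (hc : Function.Periodic c n)
    (hx : orbit a c x n = x) : Function.Periodic (orbit a c x) n := by
  intro k
  induction k with
  | zero => simpa using hx
  | succ k ih => rw [Nat.add_right_comm, orbit_succ, orbit_succ, ih, Nat.add_right_comm, ha, hc]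

noncomputable def continuant (a c : ℕ → ℝ) : ℕ → ℝ[X]
  | 0 => X
  | 1 => C (a 1) * X - C (c 0)
  | k + 2 => C (a (k + 2)) * continuant a c (k + 1) - C (c (k + 1)) * continuant a c k

lemma natDegree_continuant_le (k : ℕ) : (continuant a c k).natDegree ≤ 1 := by
  induction k using Nat.twoStepInduction with
  | zero => exact natDegree_X_le
  | one => unfold continuant; compute_degree
  | more k ih₀ ih₁ =>
    rw [continuant]
    exact (natDegree_sub_le _ _).trans
      (max_le ((natDegree_C_mul_le _ _).trans ih₁) ((natDegree_C_mul_le _ _).trans ih₀))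

lemma eval_continuant {k : ℕ} (hx : ∀ j < k, orbit a c x j ≠ 0) :
    (continuant a c k).eval x = ∏ j ∈ range (k + 1), orbit a c x j := by
  induction k using Nat.twoStepInduction with
  | zero => simp [continuant]
  | one =>
    have hx0 : x ≠ 0 := hx 0 one_pos
    simp only [continuant, eval_sub, eval_mul, eval_C, eval_X, prod_range_succ, range_zero,
      prod_empty, one_mul, orbit_succ, orbit_zero]
    field_simp
  | more k ih₀ ih₁ =>
    have hk : orbit a c x (k + 1) ≠ 0 := hx (k + 1) (by omega)
    rw [continuant, eval_sub, eval_mul, eval_mul, eval_C, eval_C,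
      ih₀ fun j hj => hx j (by omega), ih₁ fun j hj => hx j (by omega),
      prod_range_succ _ (k + 2), prod_range_succ _ (k + 1), orbit_succ (k + 1)]
    field_simp

noncomputable def closingPoly (a c : ℕ → ℝ) (n : ℕ) : ℝ[X] :=
  continuant a c n - X * continuant a c (n - 1)

lemma natDegree_closingPoly_le : (closingPoly a c n).natDegree ≤ 2 :=
  (natDegree_sub_le _ _).trans <| max_le ((natDegree_continuant_le n).trans one_le_two)
    (natDegree_mul_le.trans (add_le_add natDegree_X_le (natDegree_continuant_le _)))

lemma eval_closingPoly (hn : 0 < n) (hx : ∀ j < n, orbit a c x j ≠ 0) :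
    (closingPoly a c n).eval x = (∏ j ∈ range n, orbit a c x j) * (orbit a c x n - x) := by
  obtain ⟨m, rfl⟩ : ∃ m, n = m + 1 := ⟨n - 1, by omega⟩
  rw [closingPoly, eval_sub, eval_mul, eval_X, eval_continuant hx,
    eval_continuant fun j hj => hx j (by omega), prod_range_succ, Nat.add_sub_cancel]
  ring

section SubOrbit

variable (hc : ∀ k, 0 ≤ c k) (ht : IsSubOrbit a c t) (hn : 0 < n)
include hc ht hn

lemma IsSubOrbit.eval_closingPoly_eq (hx : t 0 ≤ x) :
    (closingPoly a c n).eval x = (∏ j ∈ range n, orbit a c x j) * (orbit a c x n - x) :=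
  eval_closingPoly hn fun j _ => (ht.orbit_pos hc hx j).ne'

lemma IsSubOrbit.eval_closingPoly_neg (hx : t 0 ≤ x) (hax : a n < x) :
    (closingPoly a c n).eval x < 0 := by
  rw [ht.eval_closingPoly_eq hc hn hx]
  refine mul_neg_of_pos_of_neg (prod_pos fun j _ => ht.orbit_pos hc hx j) ?_
  obtain ⟨m, rfl⟩ : ∃ m, n = m + 1 := ⟨n - 1, by omega⟩
  have : 0 ≤ c m / orbit a c x m := div_nonneg (hc m) (ht.orbit_pos hc hx m).le
  rw [orbit_succ]
  linarith

lemma IsSubOrbit.exists_closed_orbit (hper : t n = t 0) :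
    ∃ x, t 0 ≤ x ∧ orbit a c x n = x := by
  set M := max (t 0) (a n) + 1
  have hM : t 0 ≤ M := (le_max_left _ _).trans (le_add_of_nonneg_right zero_le_one)
  have hlow : 0 ≤ (closingPoly a c n).eval (t 0) := by
    rw [ht.eval_closingPoly_eq hc hn le_rfl]
    refine mul_nonneg (prod_nonneg fun j _ => (ht.orbit_pos hc le_rfl j).le) ?_
    linarith [ht.le_orbit hc le_rfl n]
  have hhigh := ht.eval_closingPoly_neg hc hn hM (by linarith [le_max_right (t 0) (a n)])
  obtain ⟨x, ⟨hx, -⟩, hroot⟩ := intermediate_value_Icc' hM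
    (closingPoly a c n).continuous.continuousOn ⟨hhigh.le, hlow⟩
  refine ⟨x, hx, ?_⟩
  dsimp only at hroot
  rw [ht.eval_closingPoly_eq hc hn hx, mul_eq_zero, sub_eq_zero] at hroot
  exact hroot.resolve_left (prod_pos fun j _ => ht.orbit_pos hc hx j).ne'

end SubOrbit

lemma closingPoly_ne_zero (hc : ∀ k, 0 ≤ c k) (hn : 0 < n) (hx : ∀ k, 0 < orbit a c x k) :
    closingPoly a c n ≠ 0 := by
  intro h
  have hy : x ≤ max x (a n) + 1 := by linarith [le_max_left x (a n)]
  have hay : a n < max x (a n) + 1 := by linarith [le_max_right x (a n)]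
  simpa [h] using (isSubOrbit_orbit hx).eval_closingPoly_neg hc hn hy hay

lemma exists_pair_of_closed_orbits (hc : ∀ k, 0 ≤ c k) (hn : 0 < n) :
    ∃ x y, ∀ z, (∀ k, 0 < orbit a c z k) → orbit a c z n = z → z = x ∨ z = y := by
  by_cases hpos : ∃ x, ∀ k, 0 < orbit a c x k
  · obtain ⟨x, hx⟩ := hpos
    have hne := closingPoly_ne_zero hc hn hx
    obtain ⟨y₁, y₂, hy⟩ := Multiset.exists_pair_of_card_le_two
      ((card_roots' _).trans natDegree_closingPoly_le) 0
    refine ⟨y₁, y₂, fun z hz hzn => hy z ((mem_roots hne).2 ?_)⟩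
    rw [IsRoot, eval_closingPoly hn fun j _ => (hz j).ne', hzn, sub_self, mul_zero]
  · exact ⟨0, 0, fun z hz => absurd ⟨z, hz⟩ hpos⟩

end Orbit

namespace IsCPRep

variable {n : ℕ} {A : Matrix (Fin n) (Fin n) ℝ} {L : Multiset (Fin n → ℝ)} {b : Fin n → ℝ}
  {i j : Fin n}

lemma nodup (h : IsCPRep A L) : L.Nodup := by
  obtain ⟨l, rfl, hl⟩ := h.2.2.1
  exact Multiset.coe_nodup.2 (hl.imp fun hbc => hbc.injective.ne (by decide : (0 : Fin 2) ≠ 1))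

lemma sum_toFinset_vecMulVec (h : IsCPRep A L) : ∑ b ∈ L.toFinset, vecMulVec b b = A := by
  rw [sum_eq_multiset_sum, Multiset.toFinset_val, h.nodup.dedup, h.2.2.2]

lemma apply_eq_sum (h : IsCPRep A L) (i j : Fin n) : A i j = ∑ b ∈ L.toFinset, b i * b j := by
  simp only [← h.sum_toFinset_vecMulVec, Matrix.sum_apply, vecMulVec_apply]

lemma mul_le_apply (h : IsCPRep A L) (hb : b ∈ L) (i j : Fin n) : b i * b j ≤ A i j := by
  rw [h.apply_eq_sum]
  refine single_le_sum (f := fun b : Fin n → ℝ => b i * b j) (fun c hc => ?_)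
    (Multiset.mem_toFinset.2 hb)
  rw [Multiset.mem_toFinset] at hc
  exact mul_nonneg (h.1 c hc i) (h.1 c hc j)

lemma isSymm (h : IsCPRep A L) : A.IsSymm := by
  ext i j
  simp only [Matrix.transpose_apply, h.apply_eq_sum, mul_comm]

lemma adj_of_ne_zero (h : IsCPRep A L) (hb : b ∈ L) (hi : b i ≠ 0) (hj : b j ≠ 0) (hij : i ≠ j) :
    (matGraph A).Adj i j :=
  ⟨hij, .inl (mul_pos ((h.1 b hb i).lt_of_ne' hi) ((h.1 b hb j).lt_of_ne' hj)
    |>.trans_le (h.mul_le_apply hb i j)).ne'⟩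

lemma exists_mem_ne_zero (h : IsCPRep A L) (hij : A i j ≠ 0) : ∃ b ∈ L, b i ≠ 0 ∧ b j ≠ 0 := by
  contrapose! hij
  rw [h.apply_eq_sum]
  refine sum_eq_zero fun b hb => ?_
  by_cases hbi : b i = 0
  · rw [hbi, zero_mul]
  · rw [hij b (Multiset.mem_toFinset.1 hb) hbi, mul_zero]

end IsCPRep

open Fin.NatCast Fin.CommRing

section Cycle

variable {n : ℕ} [NeZero n]

lemma Fin.add_natCast_ne_self {k : ℕ} (hk₀ : 0 < k) (hk : k < n) (x : Fin n) : x + k ≠ x := by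
  rw [Ne, add_eq_left, Fin.natCast_eq_zero]
  exact Nat.not_dvd_of_pos_of_lt hk₀ hk

lemma Fin.add_one_ne_self (hn : 2 ≤ n) (x : Fin n) : x + 1 ≠ x :=
  fun h => x.add_natCast_ne_self (k := 1) Nat.one_pos hn (by linear_combination h)

lemma Fin.add_one_add_one_ne_self (hn : 3 ≤ n) (x : Fin n) : x + 1 + 1 ≠ x :=
  fun h => x.add_natCast_ne_self (k := 2) Nat.two_pos hn (by linear_combination h)

lemma Fin.add_one_add_one_add_one_ne_self (hn : 4 ≤ n) (x : Fin n) : x + 1 + 1 + 1 ≠ x :=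
  fun h => x.add_natCast_ne_self (k := 3) (by norm_num) hn (by linear_combination h)

lemma cycleGraph_adj_iff (hn : 2 ≤ n) {u v : Fin n} :
    (SimpleGraph.cycleGraph n).Adj u v ↔ u = v + 1 ∨ v = u + 1 := by
  have h1 : ∀ w : Fin n, w.val = 1 ↔ w = 1 := fun w => by
    simp [Fin.ext_iff, Nat.mod_eq_of_lt (show 1 < n by omega)]
  rw [SimpleGraph.cycleGraph_adj', h1, h1, sub_eq_iff_eq_add, sub_eq_iff_eq_add, add_comm v,
    add_comm u]

variable {A : Matrix (Fin n) (Fin n) ℝ} {L : Multiset (Fin n → ℝ)} {b : Fin n → ℝ} {i j u v : Fin n}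

lemma matGraph_adj_iff (hn : 2 ≤ n) (hcyc : matGraph A = SimpleGraph.cycleGraph n) :
    (matGraph A).Adj u v ↔ u = v + 1 ∨ v = u + 1 := by
  rw [hcyc, cycleGraph_adj_iff hn]

lemma apply_eq_zero_of_cycle (hn : 2 ≤ n) (hcyc : matGraph A = SimpleGraph.cycleGraph n)
    (huv : u ≠ v) (h₁ : u ≠ v + 1) (h₂ : v ≠ u + 1) : A u v = 0 := by
  by_contra hA
  exact ((matGraph_adj_iff hn hcyc).1 ⟨huv, .inl hA⟩).elim h₁ h₂

def edgeVec (p q : Fin n → ℝ) (i : Fin n) : Fin n → ℝ :=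
  Pi.single i (p i) + Pi.single (i + 1) (q i)

noncomputable def edgeRep (p q : Fin n → ℝ) : Multiset (Fin n → ℝ) :=
  univ.val.map (edgeVec p q)

section EdgeVec

variable {p q : Fin n → ℝ}

lemma edgeVec_apply_self (hn : 2 ≤ n) : edgeVec p q i i = p i := by
  simp [edgeVec, (i.add_one_ne_self hn).symm]

lemma edgeVec_apply_add_one (hn : 2 ≤ n) : edgeVec p q i (i + 1) = q i := by
  simp [edgeVec, i.add_one_ne_self hn]

lemma edgeVec_apply_of_ne (hj : j ≠ i) (hj1 : j ≠ i + 1) : edgeVec p q i j = 0 := by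
  simp [edgeVec, hj, hj1]

lemma edgeVec_ne_zero (hn : 2 ≤ n) (hp : p i ≠ 0) : edgeVec p q i ≠ 0 :=
  fun h0 => hp (by simpa [edgeVec_apply_self hn] using congrFun h0 i)

lemma sum_vecMulVec_edgeVec_apply (p q : Fin n → ℝ) (u v : Fin n) :
    (∑ i, vecMulVec (edgeVec p q i) (edgeVec p q i)) u v =
      (if u = v then p u ^ 2 + q (u - 1) ^ 2 else 0) + (if u + 1 = v then p u * q u else 0) +
        (if u = v + 1 then p v * q v else 0) := by
  have hshift (w : Fin n) (g : Fin n → ℝ) : ∑ i, (if w = i + 1 then g i else 0) = g (w - 1) := by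
    simp_rw [← sub_eq_iff_eq_add, sum_ite_eq, mem_univ, if_true]
  simp only [Matrix.sum_apply, vecMulVec_apply, edgeVec, Pi.add_apply, Pi.single_apply, add_mul,
    mul_add, ite_mul, mul_ite, zero_mul, mul_zero, sum_add_distrib, sum_ite_eq, mem_univ, if_true,
    hshift, sub_add_cancel, eq_sub_iff_add_eq]
  split_ifs <;> grind

lemma sum_map_edgeRep (p q : Fin n → ℝ) :
    ((edgeRep p q).map fun b => vecMulVec b b).sum =
      ∑ i, vecMulVec (edgeVec p q i) (edgeVec p q i) := by
  rw [edgeRep, Multiset.map_map]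
  rfl

lemma pairwise_linearIndependent_edgeRep (hn : 3 ≤ n) (hp : ∀ i, 0 < p i) (hq : ∀ i, 0 < q i) :
    (edgeRep p q).Pairwise fun b c => LinearIndependent ℝ ![b, c] := by
  refine ⟨_, Fin.univ_val_map _, List.pairwise_ofFn.2 fun i j hij => ?_⟩
  have hj₀ : edgeVec p q j ≠ 0 := edgeVec_ne_zero (by omega) (hp j).ne'
  by_cases hij1 : i = j + 1
  · refine linearIndependent_fin2_of_apply (i + 1) ?_ (edgeVec_apply_of_ne ?_ ?_) hj₀
    · rw [edgeVec_apply_add_one (by omega)]; exact (hq i).ne'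
    · rw [hij1]; exact j.add_one_add_one_ne_self hn
    · rw [hij1]; exact (j + 1).add_one_ne_self (by omega)
  · refine linearIndependent_fin2_of_apply i ?_ (edgeVec_apply_of_ne hij.ne hij1) hj₀
    rw [edgeVec_apply_self (by omega)]; exact (hp i).ne'

end EdgeVec

namespace IsCPRep

variable (hn : 4 ≤ n) (hcyc : matGraph A = SimpleGraph.cycleGraph n)
include hn hcyc

lemma apply_add_one_pos (h : IsCPRep A L) (i : Fin n) : 0 < A i (i + 1) := by
  have hne : A i (i + 1) ≠ 0 := by
    have := ((matGraph_adj_iff (by omega) hcyc).2 (.inr rfl) : (matGraph A).Adj i (i + 1)).2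
    rwa [h.isSymm.apply i (i + 1), or_self] at this
  obtain ⟨b, hb, hi, hi1⟩ := h.exists_mem_ne_zero hne
  exact (mul_pos ((h.1 b hb i).lt_of_ne' hi) ((h.1 b hb _).lt_of_ne' hi1)).trans_le
    (h.mul_le_apply hb _ _)

lemma apply_eq_zero_off_edge (h : IsCPRep A L) (hb : b ∈ L) (hi : b i ≠ 0) (hi1 : b (i + 1) ≠ 0)
    (hj : j ≠ i) (hj1 : j ≠ i + 1) : b j = 0 := by
  by_contra hbj
  -- `j` would be adjacent to both `i` and `i + 1`, closing a triangle in the cycle.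
  have adj := fun {k} (hk : b k ≠ 0) (hjk : j ≠ k) =>
    (matGraph_adj_iff (by omega) hcyc).1 (h.adj_of_ne_zero hb hbj hk hjk)
  rcases adj hi hj with h₁ | rfl
  · exact hj1 h₁
  rcases adj hi1 hj1 with h₂ | h₂
  · exact j.add_one_add_one_add_one_ne_self hn h₂.symm
  · exact hj (add_right_cancel h₂).symm

lemma edge_eq_of_apply_ne_zero (h : IsCPRep A L) (hb : b ∈ L) (hi : b i ≠ 0) (hi1 : b (i + 1) ≠ 0)
    (hj : b j ≠ 0) (hj1 : b (j + 1) ≠ 0) : j = i := by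
  by_contra hji
  have hji1 : j = i + 1 :=
    by_contra fun hji1 => hj (h.apply_eq_zero_off_edge hn hcyc hb hi hi1 hji hji1)
  rw [hji1] at hj1
  refine hj1 (h.apply_eq_zero_off_edge hn hcyc hb hi hi1 (i.add_one_add_one_ne_self (by omega)) ?_)
  exact (i + 1).add_one_ne_self (by omega)

lemma exists_edge_cover (h : IsCPRep A L) :
    ∃ F : Fin n → Fin n → ℝ, univ.val.map F ≤ L ∧ ∀ i, F i i ≠ 0 ∧ F i (i + 1) ≠ 0 := by
  choose F hF hFi hFi1 using fun i => h.exists_mem_ne_zero (h.apply_add_one_pos hn hcyc i).ne'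
  have hinj : Function.Injective F := fun i j hij =>
    h.edge_eq_of_apply_ne_zero hn hcyc (hF j) (hFi j) (hFi1 j) (hij ▸ hFi i) (hij ▸ hFi1 i)
  refine ⟨F, ?_, fun i => ⟨hFi i, hFi1 i⟩⟩
  rw [Multiset.le_iff_subset (univ.nodup.map hinj)]
  intro b hb
  obtain ⟨i, -, rfl⟩ := Multiset.mem_map.1 hb
  exact hF i

lemma le_card (h : IsCPRep A L) : n ≤ L.card := by
  obtain ⟨F, hle, -⟩ := h.exists_edge_cover hn hcyc
  simpa using Multiset.card_le_card hle

lemma exists_eq_edgeRep (h : IsCPRep A L) (hcard : L.card = n) :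
    ∃ p q : Fin n → ℝ, (∀ i, 0 < p i) ∧ (∀ i, 0 < q i) ∧ L = edgeRep p q := by
  obtain ⟨F, hle, hF⟩ := h.exists_edge_cover hn hcyc
  have hL : L = univ.val.map F := (Multiset.eq_of_le_of_card_le hle (by simp [hcard])).symm
  have hFmem : ∀ i, F i ∈ L := fun i => hL ▸ Multiset.mem_map_of_mem F (mem_univ i)
  refine ⟨fun i => F i i, fun i => F i (i + 1), fun i => (h.1 _ (hFmem i) i).lt_of_ne' (hF i).1,
    fun i => (h.1 _ (hFmem i) _).lt_of_ne' (hF i).2,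
    hL.trans (congrArg (univ.val.map ·) (funext fun i => ?_))⟩
  funext j
  by_cases hji : j = i
  · rw [hji, edgeVec_apply_self (by omega)]
  by_cases hji1 : j = i + 1
  · rw [hji1, edgeVec_apply_add_one (by omega)]
  rw [edgeVec_apply_of_ne hji hji1,
    h.apply_eq_zero_off_edge hn hcyc (hFmem i) (hF i).1 (hF i).2 hji hji1]

end IsCPRep

section EdgeRep

variable {p q : Fin n → ℝ}

lemma IsCPRep.mul_eq_of_edgeRep (h : IsCPRep A (edgeRep p q)) (hn : 3 ≤ n) (i : Fin n) :
    p i * q i = A i (i + 1) := by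
  rw [← h.2.2.2, sum_map_edgeRep, sum_vecMulVec_edgeVec_apply,
    if_neg (i.add_one_ne_self (by omega)).symm, if_pos rfl,
    if_neg (i.add_one_add_one_ne_self hn).symm]
  ring

lemma IsCPRep.sq_add_sq_eq_of_edgeRep (h : IsCPRep A (edgeRep p q)) (hn : 3 ≤ n) (i : Fin n) :
    p (i + 1) ^ 2 + q i ^ 2 = A (i + 1) (i + 1) := by
  rw [← h.2.2.2, sum_map_edgeRep, sum_vecMulVec_edgeVec_apply, if_pos rfl,
    if_neg ((i + 1).add_one_ne_self (by omega)), if_neg ((i + 1).add_one_ne_self (by omega)).symm,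
    add_sub_cancel_right]
  ring

lemma sum_map_edgeRep_eq (hn : 3 ≤ n) (hcyc : matGraph A = SimpleGraph.cycleGraph n)
    (hA : A.IsSymm) (hpq : ∀ i, p i * q i = A i (i + 1))
    (hdiag : ∀ i, p (i + 1) ^ 2 + q i ^ 2 = A (i + 1) (i + 1)) :
    ((edgeRep p q).map fun b => vecMulVec b b).sum = A := by
  ext u v
  rw [sum_map_edgeRep, sum_vecMulVec_edgeVec_apply]
  by_cases huv : u = v
  · subst huv
    simpa [u.add_one_ne_self (by omega), (u.add_one_ne_self (by omega)).symm] using hdiag (u - 1)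
  by_cases hv : u + 1 = v
  · subst hv
    simp [(u.add_one_ne_self (by omega)).symm, (u.add_one_add_one_ne_self hn).symm, hpq]
  by_cases hu : u = v + 1
  · subst hu
    simp [hv, huv, hpq, hA.apply]
  simp only [if_neg huv, if_neg hv, if_neg hu, add_zero]
  exact (apply_eq_zero_of_cycle (by omega) hcyc huv hu (Ne.symm hv)).symm

lemma isCPRep_edgeRep (hn : 3 ≤ n) (hcyc : matGraph A = SimpleGraph.cycleGraph n)
    (hA : A.IsSymm) (hp : ∀ i, 0 < p i) (hq : ∀ i, 0 < q i) (hpq : ∀ i, p i * q i = A i (i + 1))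
    (hdiag : ∀ i, p (i + 1) ^ 2 + q i ^ 2 = A (i + 1) (i + 1)) : IsCPRep A (edgeRep p q) := by
  refine ⟨?_, ?_, pairwise_linearIndependent_edgeRep hn hp hq,
    sum_map_edgeRep_eq hn hcyc hA hpq hdiag⟩
  · simp only [edgeRep, Multiset.mem_map, mem_univ_val, true_and, forall_exists_index]
    rintro _ i rfl j
    exact (add_nonneg (Pi.single_nonneg.2 (hp i).le) (Pi.single_nonneg.2 (hq i).le) :
      0 ≤ edgeVec p q i) j
  · simp only [edgeRep, Multiset.mem_map, mem_univ_val, true_and, forall_exists_index]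
    rintro _ i rfl
    exact edgeVec_ne_zero (by omega) (hp i).ne'

end EdgeRep

section CycleOrbit

variable {p q : Fin n → ℝ} {x : ℝ}

def diagSeq (A : Matrix (Fin n) (Fin n) ℝ) (k : ℕ) : ℝ := A k k

def offDiagSqSeq (A : Matrix (Fin n) (Fin n) ℝ) (k : ℕ) : ℝ := A k (k + 1) ^ 2

lemma periodic_diagSeq : Function.Periodic (diagSeq A) n := fun k => by simp [diagSeq]

lemma periodic_offDiagSqSeq : Function.Periodic (offDiagSqSeq A) n := fun k => by
  simp [offDiagSqSeq]

lemma orbit_sq_eq (hp : ∀ i, 0 < p i) (hpq : ∀ i, p i * q i = A i (i + 1))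
    (hdiag : ∀ i, p (i + 1) ^ 2 + q i ^ 2 = A (i + 1) (i + 1)) :
    orbit (diagSeq A) (offDiagSqSeq A) (p 0 ^ 2) = fun k : ℕ => p k ^ 2 := by
  have := orbit_eq_of_forall (a := diagSeq A) (c := offDiagSqSeq A) (t := fun k : ℕ => p k ^ 2)
    fun k => ?_
  · simpa using this
  have := (hp k).ne'
  rw [diagSeq, offDiagSqSeq, Nat.cast_succ, ← hdiag, ← hpq]
  field_simp
  ring

noncomputable def orbitRep (A : Matrix (Fin n) (Fin n) ℝ) (x : ℝ) : Multiset (Fin n → ℝ) :=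
  edgeRep (fun i => √(orbit (diagSeq A) (offDiagSqSeq A) x i))
    (fun i => A i (i + 1) / √(orbit (diagSeq A) (offDiagSqSeq A) x i))

lemma card_orbitRep : (orbitRep A x).card = n := by
  simp [orbitRep, edgeRep]

lemma isCPRep_orbitRep (hn : 3 ≤ n) (hcyc : matGraph A = SimpleGraph.cycleGraph n)
    (hA : A.IsSymm) (hA₁ : ∀ i, 0 < A i (i + 1))
    (hx : ∀ k, 0 < orbit (diagSeq A) (offDiagSqSeq A) x k)
    (hxn : orbit (diagSeq A) (offDiagSqSeq A) x n = x) : IsCPRep A (orbitRep A x) := by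
  have ht (k : ℕ) : orbit (diagSeq A) (offDiagSqSeq A) x (k : Fin n).val =
      orbit (diagSeq A) (offDiagSqSeq A) x k := by
    rw [Fin.val_natCast, (periodic_diagSeq.orbit periodic_offDiagSqSeq hxn).map_mod_nat]
  have hsqrt (i : Fin n) : 0 < √(orbit (diagSeq A) (offDiagSqSeq A) x i) :=
    Real.sqrt_pos.2 (hx i)
  refine isCPRep_edgeRep hn hcyc hA hsqrt (fun i => div_pos (hA₁ i) (hsqrt i))
    (fun i => mul_div_cancel₀ _ (hsqrt i).ne') fun i => ?_
  obtain ⟨k, rfl⟩ : ∃ k : ℕ, i = k := ⟨i, (Fin.cast_val_eq_self i).symm⟩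
  rw [div_pow, Real.sq_sqrt (hx _).le, Real.sq_sqrt (hx _).le, ← Nat.cast_add_one, ht, ht,
    orbit_succ]
  simp [diagSeq, offDiagSqSeq]

end CycleOrbit

namespace IsCPRep

variable (hn : 4 ≤ n) (hcyc : matGraph A = SimpleGraph.cycleGraph n)
include hn hcyc

lemma exists_subsolution (h : IsCPRep A L) : ∃ T : Fin n → ℝ, (∀ i, 0 < T i) ∧
    ∀ i, T (i + 1) ≤ A (i + 1) (i + 1) - A i (i + 1) ^ 2 / T i := by
  classical
  let cover (i : Fin n) := L.toFinset.filter fun b => b i ≠ 0 ∧ b (i + 1) ≠ 0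
  let T (i : Fin n) := ∑ b ∈ cover i, b i ^ 2
  let S (i : Fin n) := ∑ b ∈ cover i, b (i + 1) ^ 2
  have hT (i : Fin n) : 0 < T i := by
    obtain ⟨b, hb, hi, hi1⟩ := h.exists_mem_ne_zero (h.apply_add_one_pos hn hcyc i).ne'
    exact sum_pos' (fun _ _ => sq_nonneg _)
      ⟨b, mem_filter.2 ⟨Multiset.mem_toFinset.2 hb, hi, hi1⟩, by positivity⟩
  have hCS (i : Fin n) : A i (i + 1) ^ 2 ≤ T i * S i := by
    have : A i (i + 1) = ∑ b ∈ cover i, b i * b (i + 1) := by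
      rw [h.apply_eq_sum, sum_filter_of_ne]
      exact fun b _ hb => ⟨left_ne_zero_of_mul hb, right_ne_zero_of_mul hb⟩
    rw [this]
    exact sum_mul_sq_le_sq_mul_sq _ _ _
  have hdisj (i : Fin n) : S i + T (i + 1) ≤ A (i + 1) (i + 1) := by
    have : Disjoint (cover i) (cover (i + 1)) := disjoint_filter.2 fun b hb hi hi1 =>
      i.add_one_ne_self (by omega) <| h.edge_eq_of_apply_ne_zero hn hcyc
        (Multiset.mem_toFinset.1 hb) hi.1 hi.2 hi1.1 hi1.2
    rw [h.apply_eq_sum, ← sum_union this]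
    simp_rw [← sq]
    exact sum_le_sum_of_subset_of_nonneg (union_subset (filter_subset _ _) (filter_subset _ _))
      fun _ _ _ => sq_nonneg _
  refine ⟨T, hT, fun i => ?_⟩
  have : A i (i + 1) ^ 2 / T i ≤ S i := (div_le_iff₀' (hT i)).2 (hCS i)
  linarith [hdisj i]

end IsCPRep

section Main

variable (hn : 4 ≤ n) (hcyc : matGraph A = SimpleGraph.cycleGraph n)
include hn hcyc

theorem IsCPRep.cpRank_eq (h : IsCPRep A L) : cpRank A = n := by
  obtain ⟨T, hT, hsub⟩ := h.exists_subsolution hn hcyc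
  have hc (k : ℕ) : 0 ≤ offDiagSqSeq A k := sq_nonneg _
  have ht : IsSubOrbit (diagSeq A) (offDiagSqSeq A) fun k : ℕ => T k :=
    ⟨fun k => hT k, fun k => by simpa [diagSeq, offDiagSqSeq] using hsub k⟩
  obtain ⟨x, hx, hxn⟩ := ht.exists_closed_orbit hc (n := n) (by omega) (by simp)
  refine IsLeast.csInf_eq ⟨⟨orbitRep A x, ?_, card_orbitRep⟩, ?_⟩
  · exact isCPRep_orbitRep (by omega) hcyc h.isSymm (h.apply_add_one_pos hn hcyc)
      (ht.orbit_pos hc hx) hxn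
  · rintro _ ⟨L', hL', rfl⟩
    exact hL'.le_card hn hcyc

lemma IsMinCPRep.exists_eq_orbitRep (h : IsMinCPRep A L) :
    ∃ x, (∀ k, 0 < orbit (diagSeq A) (offDiagSqSeq A) x k) ∧
      orbit (diagSeq A) (offDiagSqSeq A) x n = x ∧ L = orbitRep A x := by
  obtain ⟨p, q, hp, -, rfl⟩ :=
    h.1.exists_eq_edgeRep hn hcyc (h.2.trans (h.1.cpRank_eq hn hcyc))
  have hpq := h.1.mul_eq_of_edgeRep (by omega)
  have horbit := orbit_sq_eq hp hpq (h.1.sq_add_sq_eq_of_edgeRep (by omega))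
  have hsqrt (i : Fin n) : √(orbit (diagSeq A) (offDiagSqSeq A) (p 0 ^ 2) i) = p i := by
    simp only [horbit, Fin.cast_val_eq_self, Real.sqrt_sq (hp i).le]
  refine ⟨p 0 ^ 2, fun k => by rw [horbit]; exact pow_pos (hp _) 2, by simp [horbit], ?_⟩
  simp only [orbitRep, hsqrt, ← hpq]
  congr
  funext i
  field_simp [(hp i).ne']

end Main

end Cycle

theorem stmt_7_general (n : ℕ) (hn : 4 ≤ n) (A : Matrix (Fin n) (Fin n) ℝ)
    (hcyc : matGraph A = SimpleGraph.cycleGraph n) :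
    ∃ L₁ L₂ : Multiset (Fin n → ℝ), ∀ L, IsMinCPRep A L → L = L₁ ∨ L = L₂ := by
  have : NeZero n := ⟨by omega⟩
  obtain ⟨x, y, hxy⟩ := exists_pair_of_closed_orbits (a := diagSeq A) (c := offDiagSqSeq A)
    (fun _ => sq_nonneg _) (by omega : 0 < n)
  refine ⟨orbitRep A x, orbitRep A y, fun L hL => ?_⟩
  obtain ⟨z, hz, hzn, rfl⟩ := hL.exists_eq_orbitRep hn hcyc
  rcases hxy z hz hzn with rfl | rfl
  exacts [.inl rfl, .inr rfl]

/-- A completely positive matrix whose graph is the `n`-cycle, `n ≥ 4`, has at most two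
minimal CP factorizations. -/
theorem stmt_7 (n : ℕ) (hn : 4 ≤ n) (A : Matrix (Fin n) (Fin n) ℝ)
    (hCP : IsCP A) (hcyc : matGraph A = SimpleGraph.cycleGraph n) :
    ∃ L₁ L₂ : Multiset (Fin n → ℝ), ∀ L, IsMinCPRep A L → L = L₁ ∨ L = L₂ :=
  stmt_7_general n hn A hcyc
end

section
/- Let A be an n×n irreducible completely positive matrix, n ≥ 2, whose graph is triangle free, and suppose the comparison matrix M(A) is nonsingular. Then A has at least two distinct minimal CP factorizations. -/
open Matrix

/-!
Take a minimal CP representation `L` of `A`. As `G(A)` is triangle free, every summand is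
supported on an edge. If two distinct summands overlap on an edge `{i, j}`, the `2 × 2` block they
contribute has two different triangular factorizations. Otherwise every edge `{i, j}` is covered by
exactly one summand `b`, and `b i / b j` is a multiplicative edge weight. If every cycle has weight
`1`, the weights integrate to a potential `z ≠ 0` with `M(A) z = 0`, contradicting nonsingularity.
Otherwise, rescaling the summands around a cycle of weight `< 1` gives a second minimal
representation.
-/

section

variable {n : ℕ} {A : Matrix (Fin n) (Fin n) ℝ} {M : Multiset (Fin n → ℝ)}

lemma Multiset.exists_pair_le_of_not_pairwise {α : Type*} {r : α → α → Prop} {s : Multiset α}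
    (h : ¬ s.Pairwise r) : ∃ a b, ¬ r a b ∧ {a, b} ≤ s := by
  induction s using Quotient.inductionOn with
  | h l =>
  have hl : ¬ l.Pairwise r := fun hl => h ⟨l, rfl, hl⟩
  simp only [List.pairwise_iff_forall_sublist, not_forall] at hl
  obtain ⟨a, b, hab, hr⟩ := hl
  exact ⟨a, b, hr, Multiset.coe_le.2 hab.subperm⟩

def IsCPDecomp (A : Matrix (Fin n) (Fin n) ℝ) (M : Multiset (Fin n → ℝ)) : Prop :=
  (∀ b ∈ M, ∀ i, 0 ≤ b i) ∧ (M.map fun b => vecMulVec b b).sum = A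

lemma IsCPRep.isCPDecomp (h : IsCPRep A M) : IsCPDecomp A M :=
  ⟨h.1, h.2.2.2⟩

lemma sum_vecMulVec_tsub_add {S S' : Multiset (Fin n → ℝ)} (hS : S ≤ M)
    (hsum : (S'.map fun b => vecMulVec b b).sum = (S.map fun b => vecMulVec b b).sum) :
    ((M - S + S').map fun b => vecMulVec b b).sum = (M.map fun b => vecMulVec b b).sum := by
  rw [Multiset.map_add, Multiset.sum_add, hsum, ← Multiset.sum_add, ← Multiset.map_add,
    tsub_add_cancel_of_le hS]

lemma IsCPDecomp.tsub_add {S S' : Multiset (Fin n → ℝ)} (h : IsCPDecomp A M) (hS : S ≤ M)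
    (hS' : ∀ b ∈ S', ∀ i, 0 ≤ b i)
    (hsum : (S'.map fun b => vecMulVec b b).sum = (S.map fun b => vecMulVec b b).sum) :
    IsCPDecomp A (M - S + S') := by
  refine ⟨fun b hb => ?_, (sum_vecMulVec_tsub_add hS hsum).trans h.2⟩
  rcases Multiset.mem_add.1 hb with hb | hb
  · exact h.1 b (Multiset.mem_of_le tsub_le_self hb)
  · exact hS' b hb

/-- A zero summand can be dropped, and two collinear summands merge into one: if `c = a • b` then
`b bᵀ + c cᵀ = w wᵀ` for `w = √(1 + a²) • b`. -/
lemma IsCPDecomp.exists_card_lt (h : IsCPDecomp A M) (hM : ¬ IsCPRep A M) :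
    ∃ M', IsCPDecomp A M' ∧ Multiset.card M' < Multiset.card M := by
  by_cases h0 : (0 : Fin n → ℝ) ∈ M
  · refine ⟨M - {0} + 0, h.tsub_add (Multiset.singleton_le.2 h0) (by simp) (by simp), ?_⟩
    simpa using Multiset.card_erase_lt_of_mem h0
  have hpair : ¬ M.Pairwise fun b c => LinearIndependent ℝ ![b, c] :=
    fun hp => hM ⟨h.1, fun b hb hb0 => h0 (hb0 ▸ hb), hp, h.2⟩
  obtain ⟨b, c, hbc, hle⟩ := Multiset.exists_pair_le_of_not_pairwise hpair
  have hb : b ∈ M := Multiset.mem_of_le hle (by simp)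
  obtain ⟨a, rfl⟩ : ∃ a : ℝ, a • b = c := by
    simpa [LinearIndependent.pair_iff' (fun hb0 => h0 (hb0 ▸ hb))] using hbc
  refine ⟨M - {b, a • b} + {√(1 + a ^ 2) • b}, h.tsub_add hle ?_ ?_, ?_⟩
  · simp only [Multiset.mem_singleton, forall_eq, Pi.smul_apply, smul_eq_mul]
    exact fun i => mul_nonneg (Real.sqrt_nonneg _) (h.1 b hb i)
  · simp only [Multiset.insert_eq_cons, Multiset.map_cons, Multiset.map_singleton,
      Multiset.sum_cons, Multiset.sum_singleton, smul_vecMulVec, vecMulVec_smul, smul_smul,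
      Real.mul_self_sqrt (by positivity : (0 : ℝ) ≤ 1 + a ^ 2)]
    rw [add_smul, one_smul, sq]
  · have := Multiset.card_le_card hle
    rw [Multiset.card_add, Multiset.card_sub hle]
    simp only [Multiset.insert_eq_cons, Multiset.card_cons, Multiset.card_singleton] at this ⊢
    omega

lemma cpRank_le_card (h : IsCPDecomp A M) : cpRank A ≤ Multiset.card M := by
  induction hk : Multiset.card M using Nat.strong_induction_on generalizing M with
  | _ k ih =>
  by_cases hM : IsCPRep A M
  · exact hk ▸ Nat.sInf_le ⟨M, hM, rfl⟩
  · obtain ⟨M', hM', hlt⟩ := h.exists_card_lt hM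
    exact (ih _ (hk ▸ hlt) hM' rfl).trans (hk ▸ hlt).le

lemma IsCPDecomp.isMinCPRep (h : IsCPDecomp A M) (hcard : Multiset.card M ≤ cpRank A) :
    IsMinCPRep A M := by
  by_cases hM : IsCPRep A M
  · exact ⟨hM, hcard.antisymm (Nat.sInf_le ⟨M, hM, rfl⟩)⟩
  · obtain ⟨M', hM', hlt⟩ := h.exists_card_lt hM
    exact absurd ((cpRank_le_card hM').trans_lt hlt) hcard.not_gt

lemma exists_isMinCPRep (h : IsCP A) : ∃ L, IsMinCPRep A L := by
  obtain ⟨L, hL, hcard⟩ := Nat.sInf_mem (s := {k | ∃ L, IsCPRep A L ∧ Multiset.card L = k}) <|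
    let ⟨L, hL⟩ := h; ⟨_, L, hL, rfl⟩
  exact ⟨L, hL, hcard⟩

lemma IsMinCPRep.tsub_add {L S S' : Multiset (Fin n → ℝ)}
    (hL : IsMinCPRep A L) (hS : S ≤ L) (hS' : ∀ b ∈ S', ∀ i, 0 ≤ b i)
    (hcard : Multiset.card S' = Multiset.card S)
    (hsum : (S'.map fun b => vecMulVec b b).sum = (S.map fun b => vecMulVec b b).sum) :
    IsMinCPRep A (L - S + S') := by
  refine (hL.1.isCPDecomp.tsub_add hS hS' hsum).isMinCPRep ?_
  have := Multiset.card_le_card hS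
  rw [Multiset.card_add, Multiset.card_sub hS, hcard, ← hL.2]
  omega

lemma multiset_sum_map_apply {ι : Type*} (S : Multiset ι) (F : ι → Matrix (Fin n) (Fin n) ℝ)
    (p q : Fin n) : (S.map F).sum p q = (S.map fun d => F d p q).sum :=
  (map_multiset_sum (entryAddMonoidHom ℝ p q) _).trans (by rw [Multiset.map_map]; rfl)

lemma IsCPDecomp.apply (h : IsCPDecomp A M) (p q : Fin n) :
    A p q = (M.map fun b => b p * b q).sum := by
  rw [← h.2, multiset_sum_map_apply]
  rfl

lemma IsCPDecomp.mul_nonneg (h : IsCPDecomp A M) {b : Fin n → ℝ} (hb : b ∈ M) (p q : Fin n) :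
    0 ≤ b p * b q :=
  _root_.mul_nonneg (h.1 b hb p) (h.1 b hb q)

lemma IsCPDecomp.apply_nonneg (h : IsCPDecomp A M) (p q : Fin n) : 0 ≤ A p q := by
  rw [h.apply]
  exact Multiset.sum_nonneg fun x hx =>
    let ⟨_, hb, hx⟩ := Multiset.mem_map.1 hx; hx ▸ h.mul_nonneg hb p q

lemma IsCPDecomp.apply_comm (h : IsCPDecomp A M) (p q : Fin n) : A p q = A q p := by
  simp only [h.apply, mul_comm]

lemma IsCPDecomp.mul_le_apply (h : IsCPDecomp A M) {b : Fin n → ℝ} (hb : b ∈ M) (p q : Fin n) :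
    b p * b q ≤ A p q := by
  rw [h.apply]
  refine Multiset.single_le_sum (fun x hx => ?_) _ (Multiset.mem_map_of_mem _ hb)
  obtain ⟨c, hc, rfl⟩ := Multiset.mem_map.1 hx
  exact h.mul_nonneg hc p q

lemma IsCPDecomp.exists_mem_mul_pos (h : IsCPDecomp A M) {p q : Fin n} (hpq : 0 < A p q) :
    ∃ b ∈ M, 0 < b p * b q := by
  by_contra! hle
  refine hpq.not_ge ?_
  rw [h.apply]
  simpa using Multiset.sum_map_le_sum_map _ (fun _ => (0 : ℝ)) hle

lemma IsCPDecomp.apply_pos_of_adj (h : IsCPDecomp A M) {p q : Fin n}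
    (hpq : (matGraph A).Adj p q) : 0 < A p q := by
  rcases hpq.2 with hne | hne
  · exact (h.apply_nonneg p q).lt_of_ne' hne
  · exact h.apply_comm p q ▸ (h.apply_nonneg q p).lt_of_ne' hne

lemma IsCPDecomp.adj_of_mul_pos (h : IsCPDecomp A M) {b : Fin n → ℝ} (hb : b ∈ M) {p q : Fin n}
    (hpq : p ≠ q) (hpos : 0 < b p * b q) : (matGraph A).Adj p q :=
  ⟨hpq, Or.inl (hpos.trans_le (h.mul_le_apply hb p q)).ne'⟩

/-- The support of a summand is a clique of `matGraph A`. -/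
lemma IsCPDecomp.support_subset (htf : (matGraph A).CliqueFree 3) (h : IsCPDecomp A M)
    {b : Fin n → ℝ} (hb : b ∈ M) {i j : Fin n} (hij : i ≠ j) (hpos : 0 < b i * b j) :
    Function.support b ⊆ {i, j} := by
  classical
  intro p hp
  by_contra hpij
  simp only [Set.mem_insert_iff, Set.mem_singleton_iff, not_or] at hpij
  have hbp : 0 < b p := (h.1 b hb p).lt_of_ne' hp
  have hbi : 0 < b i := (h.1 b hb i).lt_of_ne' (left_ne_zero_of_mul hpos.ne')
  have hbj : 0 < b j := (h.1 b hb j).lt_of_ne' (right_ne_zero_of_mul hpos.ne')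
  exact htf {i, j, p} <| SimpleGraph.is3Clique_triple_iff.2
    ⟨h.adj_of_mul_pos hb hij hpos, h.adj_of_mul_pos hb (Ne.symm hpij.1) (mul_pos hbi hbp),
      h.adj_of_mul_pos hb (Ne.symm hpij.2) (mul_pos hbj hbp)⟩

section PairVec

variable {i j : Fin n} {a b : ℝ}

def pairVec (i j : Fin n) (a b : ℝ) : Fin n → ℝ := Pi.single i a + Pi.single j b

lemma pairVec_apply_left (hij : i ≠ j) : pairVec i j a b i = a := by
  simp [pairVec, hij]

lemma pairVec_apply_right (hij : i ≠ j) : pairVec i j a b j = b := by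
  simp [pairVec, hij.symm]

lemma pairVec_nonneg (ha : 0 ≤ a) (hb : 0 ≤ b) (p : Fin n) : 0 ≤ pairVec i j a b p := by
  simp only [pairVec, Pi.add_apply, Pi.single_apply]
  split_ifs <;> positivity

lemma eq_pairVec_of_support_subset {d : Fin n → ℝ} (hij : i ≠ j)
    (h : Function.support d ⊆ {i, j}) : d = pairVec i j (d i) (d j) := by
  funext p
  by_cases hpi : p = i
  · subst hpi; rw [pairVec_apply_left hij]
  by_cases hpj : p = j
  · subst hpj; rw [pairVec_apply_right hij]
  have : d p = 0 := Function.notMem_support.1 fun hp => by simpa [hpi, hpj] using h hp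
  simp [pairVec, hpi, hpj, this]

lemma vecMulVec_pairVec (i j : Fin n) (a b : ℝ) :
    vecMulVec (pairVec i j a b) (pairVec i j a b) =
      single i i (a * a) + single i j (a * b) + single j i (b * a) + single j j (b * b) := by
  ext p q
  simp only [pairVec, vecMulVec_apply, Pi.add_apply, Pi.single_apply, Matrix.add_apply,
    Matrix.single_apply]
  split_ifs <;> grind

lemma vecMulVec_pairVec_add_vecMulVec_pairVec {c d a' b' c' d' : ℝ}
    (h₁ : a * a + c * c = a' * a' + c' * c') (h₂ : a * b + c * d = a' * b' + c' * d')
    (h₃ : b * b + d * d = b' * b' + d' * d') :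
    vecMulVec (pairVec i j a b) (pairVec i j a b) + vecMulVec (pairVec i j c d) (pairVec i j c d) =
      vecMulVec (pairVec i j a' b') (pairVec i j a' b') +
        vecMulVec (pairVec i j c' d') (pairVec i j c' d') := by
  ext p q
  simp only [vecMulVec_pairVec, Matrix.add_apply, Matrix.single_apply]
  split_ifs <;> linarith

lemma vecMulVec_pairVec_sub_vecMulVec_pairVec {a' b' : ℝ} (h : a' * b' = a * b) :
    vecMulVec (pairVec i j a' b') (pairVec i j a' b') -
        vecMulVec (pairVec i j a b) (pairVec i j a b) =
      single i i (a' * a' - a * a) + single j j (b' * b' - b * b) := by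
  ext p q
  simp only [vecMulVec_pairVec, Matrix.add_apply, Matrix.sub_apply, Matrix.single_apply]
  split_ifs <;> linarith

lemma vecMulVec_pairVec_neg_apply (hij : i ≠ j) (p q : Fin n) :
    vecMulVec (pairVec i j a (-b)) (pairVec i j a (-b)) p q =
      if p = q then vecMulVec (pairVec i j a b) (pairVec i j a b) p q
      else -vecMulVec (pairVec i j a b) (pairVec i j a b) p q := by
  simp only [vecMulVec_pairVec, Matrix.add_apply, Matrix.single_apply]
  split_ifs <;> grind

end PairVec

section OverlappingPair

variable {L : Multiset (Fin n → ℝ)}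

def HasOverlappingPair (L : Multiset (Fin n → ℝ)) : Prop :=
  ∃ b ∈ L, ∃ c ∈ L, b ≠ c ∧ ∃ i j, i ≠ j ∧ Function.support b ⊆ {i, j} ∧
    Function.support c ⊆ {i, j} ∧ 0 < b i * b j + c i * c j

lemma IsMinCPRep.tsub_pair_add_pairVec (hL : IsMinCPRep A L) {b c : Fin n → ℝ} (hb : b ∈ L)
    (hc : c ∈ L) (hbc : b ≠ c) {i j : Fin n} (hij : i ≠ j) (hbs : Function.support b ⊆ {i, j})
    (hcs : Function.support c ⊆ {i, j}) {a₁ a₂ d₁ d₂ : ℝ} (ha₁ : 0 ≤ a₁) (ha₂ : 0 ≤ a₂)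
    (hd₁ : 0 ≤ d₁) (hd₂ : 0 ≤ d₂) (h₁ : a₁ * a₁ + d₁ * d₁ = b i * b i + c i * c i)
    (h₂ : a₁ * a₂ + d₁ * d₂ = b i * b j + c i * c j)
    (h₃ : a₂ * a₂ + d₂ * d₂ = b j * b j + c j * c j) :
    IsMinCPRep A (L - {b, c} + {pairVec i j a₁ a₂, pairVec i j d₁ d₂}) := by
  refine hL.tsub_add ((Multiset.le_iff_subset (by simp [hbc])).2 (by simp [hb, hc])) ?_
    (by simp) ?_
  · simp only [Multiset.insert_eq_cons, Multiset.mem_cons, Multiset.mem_singleton]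
    rintro _ (rfl | rfl)
    exacts [pairVec_nonneg ha₁ ha₂, pairVec_nonneg hd₁ hd₂]
  · simp only [Multiset.insert_eq_cons, Multiset.map_cons, Multiset.map_singleton,
      Multiset.sum_cons, Multiset.sum_singleton]
    rw [eq_pairVec_of_support_subset hij hbs, eq_pairVec_of_support_subset hij hcs]
    exact vecMulVec_pairVec_add_vecMulVec_pairVec h₁ h₂ h₃

/-- Replace `b, c` by the lower and by the upper triangular factorization of the `2 × 2` block
`[[α, γ], [γ, β]]` of `b bᵀ + c cᵀ`; as `γ > 0` these differ. -/
theorem IsMinCPRep.exists_ne_of_hasOverlappingPair (hL : IsMinCPRep A L)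
    (h : HasOverlappingPair L) :
    ∃ L₁ L₂, L₁ ≠ L₂ ∧ IsMinCPRep A L₁ ∧ IsMinCPRep A L₂ := by
  obtain ⟨b, hb, c, hc, hbc, i, j, hij, hbs, hcs, hγ⟩ := h
  set α := b i * b i + c i * c i
  set β := b j * b j + c j * c j
  set γ := b i * b j + c i * c j
  set e := |b i * c j - b j * c i|
  have hαβ : α * β = γ * γ + e * e := by simp only [α, β, γ, e, abs_mul_abs_self]; ring
  have hα : 0 < α := by
    refine (add_nonneg (mul_self_nonneg _) (mul_self_nonneg _)).lt_of_ne' fun h0 => ?_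
    rw [show α = 0 from h0, zero_mul] at hαβ
    nlinarith [mul_self_nonneg e, mul_pos hγ hγ]
  have hβ : 0 < β := by
    refine (add_nonneg (mul_self_nonneg _) (mul_self_nonneg _)).lt_of_ne' fun h0 => ?_
    rw [show β = 0 from h0, mul_zero] at hαβ
    nlinarith [mul_self_nonneg e, mul_pos hγ hγ]
  have hsα := Real.mul_self_sqrt hα.le
  have hsβ := Real.mul_self_sqrt hβ.le
  have hsα0 : 0 < √α := Real.sqrt_pos.2 hα
  have hsβ0 : 0 < √β := Real.sqrt_pos.2 hβ
  have hL₁ := hL.tsub_pair_add_pairVec hb hc hbc hij hbs hcs (a₁ := √α) (a₂ := γ / √α)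
    (d₁ := 0) (d₂ := e / √α) hsα0.le (by positivity) le_rfl (by positivity)
    (by rw [hsα]; ring) (by rw [zero_mul, add_zero, mul_div_cancel₀ _ hsα0.ne'])
    (by rw [div_mul_div_comm, div_mul_div_comm, ← add_div, hsα, ← hαβ,
      mul_div_cancel_left₀ _ hα.ne'])
  have hL₂ := hL.tsub_pair_add_pairVec hb hc hbc hij hbs hcs (a₁ := γ / √β) (a₂ := √β)
    (d₁ := e / √β) (d₂ := 0) (by positivity) hsβ0.le (by positivity) le_rfl
    (by rw [div_mul_div_comm, div_mul_div_comm, ← add_div, hsβ, ← hαβ,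
      mul_div_cancel_right₀ _ hβ.ne'])
    (by rw [mul_zero, add_zero, div_mul_cancel₀ _ hsβ0.ne']) (by rw [hsβ]; ring)
  refine ⟨_, _, fun heq => ?_, hL₁, hL₂⟩
  -- `e ≠ 0` because summands of the minimal representation `L₁` are nonzero
  have hv : pairVec i j 0 (e / √α) ≠ 0 := hL₁.1.2.1 _ (by simp)
  have he : e ≠ 0 := fun he => hv (by simp [he, pairVec])
  have hmem : pairVec i j 0 (e / √α) ∈ ({pairVec i j (γ / √β) √β, pairVec i j (e / √β) 0} :
      Multiset (Fin n → ℝ)) := add_left_cancel heq ▸ by simp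
  have hpos : 0 < (γ / √β) ∧ 0 < e / √β := ⟨by positivity, by positivity⟩
  simp only [Multiset.insert_eq_cons, Multiset.mem_cons, Multiset.mem_singleton] at hmem
  rcases hmem with h | h
  · exact hpos.1.ne (by simpa [pairVec_apply_left hij] using congrFun h i)
  · exact hpos.2.ne (by simpa [pairVec_apply_left hij] using congrFun h i)

end OverlappingPair

open Classical in
noncomputable def edgeSummand (M : Multiset (Fin n → ℝ)) (a b : Fin n) : Fin n → ℝ :=
  if h : ∃ c ∈ M, 0 < c a * c b then h.choose else 0

noncomputable def edgeRatio (M : Multiset (Fin n → ℝ)) (a b : Fin n) : ℝ :=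
  edgeSummand M a b a / edgeSummand M a b b

lemma IsCPDecomp.edgeSummand_mem (h : IsCPDecomp A M) {a b : Fin n}
    (hab : (matGraph A).Adj a b) : edgeSummand M a b ∈ M ∧
      0 < edgeSummand M a b a * edgeSummand M a b b := by
  have hex := h.exists_mem_mul_pos (h.apply_pos_of_adj hab)
  rw [edgeSummand, dif_pos hex]
  exact hex.choose_spec

lemma IsCPDecomp.edgeSummand_pos (h : IsCPDecomp A M) {a b : Fin n}
    (hab : (matGraph A).Adj a b) : 0 < edgeSummand M a b a ∧ 0 < edgeSummand M a b b :=
  let ⟨hmem, hpos⟩ := h.edgeSummand_mem hab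
  ⟨(h.1 _ hmem a).lt_of_ne' (left_ne_zero_of_mul hpos.ne'),
    (h.1 _ hmem b).lt_of_ne' (right_ne_zero_of_mul hpos.ne')⟩

lemma IsCPDecomp.eq_of_mul_pos (htf : (matGraph A).CliqueFree 3) (h : IsCPDecomp A M)
    (hM : ¬ HasOverlappingPair M) {a b : Fin n} (hab : a ≠ b) {c c' : Fin n → ℝ} (hc : c ∈ M)
    (hc' : c' ∈ M) (hpos : 0 < c a * c b) (hpos' : 0 < c' a * c' b) : c = c' := by
  by_contra hne
  exact hM ⟨c, hc, c', hc', hne, a, b, hab, h.support_subset htf hc hab hpos,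
    h.support_subset htf hc' hab hpos', add_pos hpos hpos'⟩

lemma IsCPDecomp.eq_edgeSummand (htf : (matGraph A).CliqueFree 3) (h : IsCPDecomp A M)
    (hM : ¬ HasOverlappingPair M) {a b : Fin n} (hab : a ≠ b) {d : Fin n → ℝ} (hd : d ∈ M)
    (hpos : 0 < d a * d b) : d = edgeSummand M a b :=
  let hs := h.edgeSummand_mem (h.adj_of_mul_pos hd hab hpos)
  h.eq_of_mul_pos htf hM hab hd hs.1 hpos hs.2

lemma IsCPDecomp.edgeRatio_eq (htf : (matGraph A).CliqueFree 3) (h : IsCPDecomp A M)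
    (hM : ¬ HasOverlappingPair M) {a b : Fin n} (hab : a ≠ b) {d : Fin n → ℝ} (hd : d ∈ M)
    (hpos : 0 < d a * d b) : edgeRatio M a b = d a / d b := by
  rw [edgeRatio, ← h.eq_edgeSummand htf hM hab hd hpos]

lemma IsCPDecomp.edgeRatio_pos (h : IsCPDecomp A M) {a b : Fin n}
    (hab : (matGraph A).Adj a b) : 0 < edgeRatio M a b :=
  div_pos (h.edgeSummand_pos hab).1 (h.edgeSummand_pos hab).2

lemma IsCPDecomp.edgeRatio_mul_edgeRatio (htf : (matGraph A).CliqueFree 3) (h : IsCPDecomp A M)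
    (hM : ¬ HasOverlappingPair M) {a b : Fin n} (hab : (matGraph A).Adj a b) :
    edgeRatio M a b * edgeRatio M b a = 1 := by
  obtain ⟨hmem, hpos⟩ := h.edgeSummand_mem hab
  rw [h.edgeRatio_eq htf hM hab.ne hmem hpos,
    h.edgeRatio_eq htf hM hab.ne.symm hmem (by rwa [mul_comm]),
    div_mul_div_cancel₀ (right_ne_zero_of_mul hpos.ne'), div_self (left_ne_zero_of_mul hpos.ne')]

/-- Without overlapping pairs, a summand supported at a single vertex `i` would overlap with the
summand covering an edge at `i`. -/
lemma IsCPDecomp.exists_mul_pos (hn : 2 ≤ n) (hirr : (matGraph A).Connected)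
    (htf : (matGraph A).CliqueFree 3) (h : IsCPDecomp A M) (hM : ¬ HasOverlappingPair M)
    {d : Fin n → ℝ} (hd : d ∈ M) (hd0 : d ≠ 0) : ∃ i j, i ≠ j ∧ 0 < d i * d j := by
  by_contra! hle
  obtain ⟨i, hi⟩ := Function.ne_iff.1 hd0
  have hdi : 0 < d i := (h.1 d hd i).lt_of_ne' hi
  have hzero : ∀ p, p ≠ i → d p = 0 := fun p hp =>
    le_antisymm (nonpos_of_mul_nonpos_right (hle i p hp.symm) hdi) (h.1 d hd p)
  have := Fin.nontrivial_iff_two_le.2 hn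
  obtain ⟨u, hiu⟩ := hirr.preconnected.exists_adj_of_nontrivial i
  obtain ⟨hc, hpos⟩ := h.edgeSummand_mem hiu
  refine hM ⟨d, hd, _, hc, fun hdc => ?_, i, u, hiu.ne, fun p hp => ?_,
    h.support_subset htf hc hiu.ne hpos, by rwa [hzero u hiu.ne.symm, mul_zero, zero_add]⟩
  · rw [← hdc, hzero u hiu.ne.symm, mul_zero] at hpos
    exact hpos.false
  · by_contra hpi
    exact hp (hzero p fun hp' => hpi (by simp [hp']))

section WalkProd

open SimpleGraph Walk

variable {V : Type*} {G : SimpleGraph V} (g : V → V → ℝ)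

def walkProd {u v : V} (p : G.Walk u v) : ℝ := (p.darts.map fun d => g d.fst d.snd).prod

@[simp] lemma walkProd_nil {u : V} : walkProd g (nil : G.Walk u u) = 1 := rfl

@[simp] lemma walkProd_cons {u v w : V} (h : G.Adj u v) (p : G.Walk v w) :
    walkProd g (cons h p) = g u v * walkProd g p := by
  simp [walkProd]

@[simp] lemma walkProd_append {u v w : V} (p : G.Walk u v) (q : G.Walk v w) :
    walkProd g (p.append q) = walkProd g p * walkProd g q := by
  simp [walkProd]

lemma walkProd_eq_prod_range {u v : V} (p : G.Walk u v) :
    walkProd g p = ∏ t ∈ Finset.range p.length, g (p.getVert t) (p.getVert (t + 1)) := by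
  induction p with
  | nil => simp
  | cons h p ih => simp [ih, Finset.prod_range_succ', mul_comm]

lemma walkProd_pos (hg : ∀ a b, G.Adj a b → 0 < g a b) {u v : V} (p : G.Walk u v) :
    0 < walkProd g p := by
  induction p with
  | nil => simp
  | cons h p ih => simpa using mul_pos (hg _ _ h) ih

variable {g}

lemma walkProd_mul_walkProd_reverse (hg : ∀ a b, G.Adj a b → g a b * g b a = 1) {u v : V}
    (p : G.Walk u v) :
    walkProd g p * walkProd g p.reverse = 1 := by
  induction p with
  | nil => simp
  | @cons a b _ h p ih =>
    simp only [walkProd_cons, reverse_cons, walkProd_append, walkProd_nil, mul_one]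
    linear_combination (g a b * g b a) * ih + hg a b h

/-- A closed walk that is not a cycle either backtracks along a single edge or contains a
shorter closed subwalk, so balanced cycles make every closed walk balanced. -/
theorem walkProd_eq_one_of_forall_isCycle (hg : ∀ a b, G.Adj a b → g a b * g b a = 1)
    (hcyc : ∀ (v : V) (c : G.Walk v v), c.IsCycle → walkProd g c = 1) {v : V}
    (c : G.Walk v v) : walkProd g c = 1 := by
  induction hlen : c.length using Nat.strong_induction_on generalizing v with
  | _ k ih =>
  cases c with
  | nil => rfl
  | cons h p =>
    by_cases hp : p.IsPath
    · by_cases h3 : 3 ≤ (cons h p).length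
      · exact hcyc _ _ (isCycle_iff_isPath_tail_and_le_length.2 ⟨by simpa using hp, h3⟩)
      cases p with
      | nil => exact absurd rfl h.ne
      | cons h' p =>
        cases p with
        | nil => simpa using hg _ _ h
        | cons _ _ => simp at h3
    · have hsub : ¬ ∀ (x : V) (q : G.Walk x x), q.IsSubwalk p → q.Nil :=
        fun H => hp (isPath_iff_isSubwalk_imp_nil.2 H)
      push Not at hsub
      obtain ⟨x, q, ⟨r₁, r₂, rfl⟩, hq⟩ := hsub
      have hq0 := not_nil_iff_lt_length.1 hq
      simp only [length_cons, length_append] at hlen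
      have h₁ := ih q.length (by omega) q rfl
      have h₂ := ih _ (by simp only [length_cons, length_append]; omega)
        (cons h (r₁.append r₂)) rfl
      simp only [walkProd_cons, walkProd_append] at h₂ ⊢
      linear_combination walkProd g q * h₂ + h₁

lemma walkProd_eq_of_forall_closed (hg : ∀ a b, G.Adj a b → g a b * g b a = 1)
    (hclosed : ∀ (v : V) (c : G.Walk v v), walkProd g c = 1)
    {u v : V} (p q : G.Walk u v) : walkProd g p = walkProd g q := by
  have h₁ := hclosed u (p.append q.reverse)
  have h₂ := walkProd_mul_walkProd_reverse hg q
  rw [walkProd_append] at h₁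
  exact mul_right_cancel₀ (right_ne_zero_of_mul_eq_one h₂) (h₁.trans h₂.symm)

lemma exists_isCycle_walkProd_lt_one (hg : ∀ a b, G.Adj a b → g a b * g b a = 1)
    (hpos : ∀ a b, G.Adj a b → 0 < g a b) {v : V}
    {c : G.Walk v v} (hc : c.IsCycle) (hc1 : walkProd g c ≠ 1) :
    ∃ c' : G.Walk v v, c'.IsCycle ∧ walkProd g c' < 1 := by
  rcases hc1.lt_or_gt with hlt | hgt
  · exact ⟨c, hc, hlt⟩
  · have := walkProd_mul_walkProd_reverse hg c
    have := walkProd_pos g hpos c.reverse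
    exact ⟨c.reverse, hc.reverse, by nlinarith⟩

end WalkProd

/-- The edge ratios integrate along walks from a base vertex to a potential `z` with
`z j = z i * edgeRatio M i j` on every edge. -/
lemma IsCPDecomp.exists_balancing (hirr : (matGraph A).Connected)
    (htf : (matGraph A).CliqueFree 3) (h : IsCPDecomp A M)
    (hM : ¬ HasOverlappingPair M) (hedge : ∀ d ∈ M, ∃ i j, i ≠ j ∧ 0 < d i * d j)
    (hbal : ∀ (v : Fin n) (c : (matGraph A).Walk v v), c.IsCycle → walkProd (edgeRatio M) c = 1) :
    ∃ z : Fin n → ℝ, z ≠ 0 ∧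
      ∀ d ∈ M, ∃ i j, i ≠ j ∧ Function.support d ⊆ {i, j} ∧ d i * z i = d j * z j := by
  have hg : ∀ a b, (matGraph A).Adj a b → edgeRatio M a b * edgeRatio M b a = 1 :=
    fun _ _ hab => h.edgeRatio_mul_edgeRatio htf hM hab
  have hclosed : ∀ (v : Fin n) (c : (matGraph A).Walk v v), walkProd (edgeRatio M) c = 1 :=
    fun _ c => walkProd_eq_one_of_forall_isCycle hg hbal c
  obtain ⟨v₀⟩ := hirr.nonempty
  let z : Fin n → ℝ := fun u => walkProd (edgeRatio M) (hirr.preconnected v₀ u).some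
  have hz : ∀ i j, (matGraph A).Adj i j → z j = z i * edgeRatio M i j := fun i j hij => by
    change walkProd _ (hirr.preconnected v₀ j).some = walkProd _ (hirr.preconnected v₀ i).some * _
    rw [walkProd_eq_of_forall_closed hg hclosed _
      ((hirr.preconnected v₀ i).some.append (.cons hij .nil))]
    simp
  refine ⟨z, fun hz0 => ?_, fun d hd => ?_⟩
  · simpa [z, hclosed] using congrFun hz0 v₀
  · obtain ⟨i, j, hij, hpos⟩ := hedge d hd
    refine ⟨i, j, hij, h.support_subset htf hd hij hpos, ?_⟩
    rw [hz i j (h.adj_of_mul_pos hd hij hpos), h.edgeRatio_eq htf hM hij hd hpos]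
    field_simp [right_ne_zero_of_mul hpos.ne']

lemma IsCPDecomp.compMatrix_eq_sum (h : IsCPDecomp A M) :
    compMatrix A = (M.map fun d => compMatrix (vecMulVec d d)).sum := by
  ext p q
  have habs : (M.map fun d => |d p * d q|) = M.map fun d => d p * d q :=
    Multiset.map_congr rfl fun d hd => abs_of_nonneg (h.mul_nonneg hd p q)
  rw [multiset_sum_map_apply]
  by_cases hpq : p = q
  · subst hpq
    simp only [compMatrix, if_true, vecMulVec_apply]
    rw [abs_of_nonneg (h.apply_nonneg p p), h.apply, habs]
  · simp only [compMatrix, hpq, if_false, vecMulVec_apply]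
    rw [abs_of_nonneg (h.apply_nonneg p q), h.apply, Multiset.sum_map_neg, habs]

lemma compMatrix_vecMulVec_pairVec {i j : Fin n} {a b : ℝ} (hij : i ≠ j) (ha : 0 ≤ a)
    (hb : 0 ≤ b) :
    compMatrix (vecMulVec (pairVec i j a b) (pairVec i j a b)) =
      vecMulVec (pairVec i j a (-b)) (pairVec i j a (-b)) := by
  ext p q
  rw [vecMulVec_pairVec_neg_apply hij, compMatrix, vecMulVec_apply,
    abs_of_nonneg (mul_nonneg (pairVec_nonneg ha hb p) (pairVec_nonneg ha hb q))]

lemma IsCPDecomp.det_compMatrix_eq_zero (h : IsCPDecomp A M) {z : Fin n → ℝ} (hz : z ≠ 0)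
    (hM : ∀ d ∈ M, ∃ i j, i ≠ j ∧ Function.support d ⊆ {i, j} ∧ d i * z i = d j * z j) :
    (compMatrix A).det = 0 := by
  refine Matrix.exists_mulVec_eq_zero_iff.1 ⟨z, hz, ?_⟩
  rw [h.compMatrix_eq_sum]
  refine (map_multiset_sum (mulVec.addMonoidHomLeft z) _).trans
    (Multiset.sum_eq_zero fun x hx => ?_)
  rw [Multiset.map_map] at hx
  obtain ⟨d, hd, rfl⟩ := Multiset.mem_map.1 hx
  obtain ⟨i, j, hij, hsupp, hdz⟩ := hM d hd
  change compMatrix (vecMulVec d d) *ᵥ z = 0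
  rw [eq_pairVec_of_support_subset hij hsupp,
    compMatrix_vecMulVec_pairVec hij (h.1 d hd i) (h.1 d hd j), vecMulVec_mulVec]
  simp [pairVec, add_dotProduct, hdz]

section Rotation

open Finset

def affineIter (r k : ℕ → ℝ) (w₀ : ℝ) : ℕ → ℝ
  | 0 => w₀
  | t + 1 => r t * affineIter r k w₀ t + k t

variable {r k : ℕ → ℝ} {m : ℕ}

lemma affineIter_eq (w₀ : ℝ) (t : ℕ) :
    affineIter r k w₀ t = (∏ s ∈ range t, r s) * w₀ + affineIter r k 0 t := by
  induction t with
  | zero => simp [affineIter]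
  | succ t ih => rw [affineIter, affineIter, ih, prod_range_succ]; ring

lemma affineIter_nonneg (hr : ∀ t < m, 0 ≤ r t) (hk : ∀ t < m, 0 ≤ k t) {w₀ : ℝ} (hw : 0 ≤ w₀)
    {t : ℕ} (ht : t ≤ m) : 0 ≤ affineIter r k w₀ t := by
  induction t with
  | zero => exact hw
  | succ t ih => exact add_nonneg (mul_nonneg (hr t ht) (ih (by omega))) (hk t ht)

lemma affineIter_pos (hr : ∀ t < m, 0 ≤ r t) (hk : ∀ t < m, 0 < k t) {w₀ : ℝ} (hw : 0 ≤ w₀)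
    {t : ℕ} (ht : t ≤ m) (hw' : 0 < w₀ ∨ 0 < t) : 0 < affineIter r k w₀ t := by
  cases t with
  | zero => simpa [affineIter] using hw'
  | succ t => exact add_pos_of_nonneg_of_pos (mul_nonneg (hr t ht)
      (affineIter_nonneg hr (fun s hs => (hk s hs).le) hw (by omega))) (hk t ht)

lemma exists_pos_affineIter_eq_self (hm : 0 < m) (hr : ∀ t < m, 0 < r t)
    (hk : ∀ t < m, 0 < k t) (hP : ∏ t ∈ range m, r t < 1) :
    ∃ w₀ > 0, affineIter r k w₀ m = w₀ := by
  have hK := affineIter_pos (fun t ht => (hr t ht).le) hk le_rfl le_rfl (Or.inr hm)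
  refine ⟨affineIter r k 0 m / (1 - ∏ t ∈ range m, r t), div_pos hK (sub_pos.2 hP), ?_⟩
  rw [affineIter_eq]
  field_simp [(sub_pos.2 hP).ne']
  ring

/-- Rescaling `x_t e_{s_t} + y_t e_{s_{t+1}}` to `x'_t e_{s_t} + (x_t y_t / x'_t) e_{s_{t+1}}` keeps
the off-diagonal entries. With `x'_t² = x_t² + 1 / w_t` the diagonal changes telescope around the
closed chain `s_0, …, s_m = s_0` exactly when `w_{t+1} = (x_t / y_t)² w_t + 1 / y_t²`; since
`∏ x < ∏ y` this affine recursion is contracting and has a positive periodic orbit. -/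
theorem exists_sum_vecMulVec_pairVec_eq (hm : 0 < m) (s : ℕ → Fin n) (hs : s m = s 0)
    {x y : ℕ → ℝ} (hx : ∀ t < m, 0 < x t) (hy : ∀ t < m, 0 < y t)
    (hxy : ∏ t ∈ range m, x t < ∏ t ∈ range m, y t) :
    ∃ x' : ℕ → ℝ, (∀ t < m, x t < x' t) ∧
      ∑ t ∈ range m, vecMulVec (pairVec (s t) (s (t + 1)) (x' t) (x t * y t / x' t))
        (pairVec (s t) (s (t + 1)) (x' t) (x t * y t / x' t)) =
      ∑ t ∈ range m, vecMulVec (pairVec (s t) (s (t + 1)) (x t) (y t))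
        (pairVec (s t) (s (t + 1)) (x t) (y t)) := by
  set r : ℕ → ℝ := fun t => (x t / y t) ^ 2
  set k : ℕ → ℝ := fun t => 1 / y t ^ 2
  have hr : ∀ t < m, 0 < r t := fun t ht => by have := hx t ht; have := hy t ht; positivity
  have hk : ∀ t < m, 0 < k t := fun t ht => by have := hy t ht; positivity
  have hP : ∏ t ∈ range m, r t < 1 := by
    have hX : 0 ≤ ∏ t ∈ range m, x t := prod_nonneg fun t ht => (hx t (mem_range.1 ht)).le
    have hY : 0 < ∏ t ∈ range m, y t := prod_pos fun t ht => hy t (mem_range.1 ht)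
    rw [prod_pow, prod_div_distrib, div_pow, div_lt_one (by positivity)]
    exact pow_lt_pow_left₀ hxy hX two_ne_zero
  obtain ⟨w₀, hw₀, hper⟩ := exists_pos_affineIter_eq_self hm hr hk hP
  set w := affineIter r k w₀
  have hw : ∀ t ≤ m, 0 < w t := fun t ht =>
    affineIter_pos (fun t ht => (hr t ht).le) hk hw₀.le ht (Or.inl hw₀)
  set x' : ℕ → ℝ := fun t => √(x t ^ 2 + 1 / w t)
  have hx'sq : ∀ t < m, x' t * x' t = x t ^ 2 + 1 / w t := fun t ht =>
    Real.mul_self_sqrt (by have := hw t ht.le; positivity)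
  have hx'pos : ∀ t < m, 0 < x' t := fun t ht =>
    Real.sqrt_pos.2 (by have := hx t ht; have := hw t ht.le; positivity)
  refine ⟨x', fun t ht => Real.lt_sqrt_of_sq_lt (by simpa using hw t ht.le), ?_⟩
  set H : ℕ → Matrix (Fin n) (Fin n) ℝ := fun t => single (s t) (s t) (1 / w t)
  have hstep : ∀ t ∈ range m,
      vecMulVec (pairVec (s t) (s (t + 1)) (x' t) (x t * y t / x' t))
        (pairVec (s t) (s (t + 1)) (x' t) (x t * y t / x' t)) -
      vecMulVec (pairVec (s t) (s (t + 1)) (x t) (y t)) (pairVec (s t) (s (t + 1)) (x t) (y t)) =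
      H t - H (t + 1) := by
    intro t ht
    rw [mem_range] at ht
    have hW := hw t ht.le
    have hxt := hx t ht
    have hyt := hy t ht
    rw [vecMulVec_pairVec_sub_vecMulVec_pairVec (mul_div_cancel₀ _ (hx'pos t ht).ne'),
      show H t - H (t + 1) = single (s t) (s t) (1 / w t) +
        single (s (t + 1)) (s (t + 1)) (-(1 / w (t + 1))) by
          simp only [H, single_neg, sub_eq_add_neg]]
    congr 2
    · rw [hx'sq t ht]; ring
    · rw [div_mul_div_comm, hx'sq t ht]
      change _ = -(1 / (r t * w t + k t))
      have hden : x t ^ 2 * w t + 1 ≠ 0 := by positivity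
      simp only [r, k]
      field_simp
      ring
  rw [← sub_eq_zero, ← sum_sub_distrib, sum_congr rfl hstep, sum_range_sub']
  simp [H, hs, w, hper, affineIter]

end Rotation

section Cycle

open Finset

lemma IsCPDecomp.edge_eq_of_edgeSummand_eq (htf : (matGraph A).CliqueFree 3)
    (h : IsCPDecomp A M) {a b a' b' : Fin n} (hab : (matGraph A).Adj a b)
    (ha'b' : (matGraph A).Adj a' b') (heq : edgeSummand M a b = edgeSummand M a' b') :
    s(a, b) = s(a', b') := by
  obtain ⟨-, hpos⟩ := h.edgeSummand_mem hab
  obtain ⟨hmem', hpos'⟩ := h.edgeSummand_mem ha'b'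
  have hsupp := h.support_subset htf hmem' ha'b'.ne hpos'
  rw [← heq] at hsupp
  have ha := hsupp (left_ne_zero_of_mul hpos.ne')
  have hb := hsupp (right_ne_zero_of_mul hpos.ne')
  simp only [Set.mem_insert_iff, Set.mem_singleton_iff] at ha hb
  exact Sym2.eq_of_ne_mem hab.ne (Sym2.mem_mk_left a b) (Sym2.mem_mk_right a b)
    (by simpa [Sym2.mem_iff] using ha) (by simpa [Sym2.mem_iff] using hb)

lemma IsCPDecomp.edgeSummand_eq_pairVec (htf : (matGraph A).CliqueFree 3) (h : IsCPDecomp A M)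
    {a b : Fin n} (hab : (matGraph A).Adj a b) :
    edgeSummand M a b = pairVec a b (edgeSummand M a b a) (edgeSummand M a b b) :=
  let ⟨hmem, hpos⟩ := h.edgeSummand_mem hab
  eq_pairVec_of_support_subset hab.ne (h.support_subset htf hmem hab.ne hpos)

lemma IsCPDecomp.nodup_edgeSummand_of_isCycle (htf : (matGraph A).CliqueFree 3)
    (h : IsCPDecomp A M) {v : Fin n} {c : (matGraph A).Walk v v} (hc : c.IsCycle) :
    ((Multiset.range c.length).map fun t =>
      edgeSummand M (c.getVert t) (c.getVert (t + 1))).Nodup := by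
  refine (Multiset.nodup_range _).map_on fun t ht t' ht' heq => ?_
  rw [Multiset.mem_range] at ht ht'
  have hedge := h.edge_eq_of_edgeSummand_eq htf (c.adj_getVert_succ ht) (c.adj_getVert_succ ht') heq
  rwa [← c.getElem_edges (by simpa using ht), ← c.getElem_edges (by simpa using ht'),
    hc.edges_nodup.getElem_inj_iff] at hedge

/-- Rescale the summands covering the edges of `c` by `exists_sum_vecMulVec_pairVec_eq`; the result
is new since every edge is covered by only one summand of `L`. -/
theorem IsMinCPRep.exists_ne_of_walkProd_lt_one {L : Multiset (Fin n → ℝ)}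
    (htf : (matGraph A).CliqueFree 3) (hL : IsMinCPRep A L) (hM : ¬ HasOverlappingPair L)
    {v : Fin n} {c : (matGraph A).Walk v v} (hc : c.IsCycle)
    (hlt : walkProd (edgeRatio L) c < 1) : ∃ L', L' ≠ L ∧ IsMinCPRep A L' := by
  have h := hL.1.isCPDecomp
  set m := c.length
  set s : ℕ → Fin n := c.getVert
  have hm : 0 < m := by have := hc.three_le_length; omega
  have hadj : ∀ t < m, (matGraph A).Adj (s t) (s (t + 1)) := fun t ht => c.adj_getVert_succ ht
  set b : ℕ → Fin n → ℝ := fun t => edgeSummand L (s t) (s (t + 1))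
  have hb : ∀ t < m, b t ∈ L := fun t ht => (h.edgeSummand_mem (hadj t ht)).1
  set x : ℕ → ℝ := fun t => b t (s t)
  set y : ℕ → ℝ := fun t => b t (s (t + 1))
  have hx : ∀ t < m, 0 < x t := fun t ht => (h.edgeSummand_pos (hadj t ht)).1
  have hy : ∀ t < m, 0 < y t := fun t ht => (h.edgeSummand_pos (hadj t ht)).2
  have hxy : ∏ t ∈ range m, x t < ∏ t ∈ range m, y t := by
    rw [walkProd_eq_prod_range] at hlt
    rwa [show ∏ t ∈ range m, edgeRatio L (s t) (s (t + 1)) = ∏ t ∈ range m, x t / y t from rfl,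
      prod_div_distrib, div_lt_one (prod_pos fun t ht => hy t (mem_range.1 ht))] at hlt
  obtain ⟨x', hxx', hsum⟩ := exists_sum_vecMulVec_pairVec_eq hm s (by simp [s, m]) hx hy hxy
  set b' : ℕ → Fin n → ℝ := fun t => pairVec (s t) (s (t + 1)) (x' t) (x t * y t / x' t)
  have hb'pos : ∀ t < m, 0 < x' t ∧ 0 < x t * y t / x' t := fun t ht =>
    have := hx t ht; have := hy t ht; have := (hx t ht).trans (hxx' t ht); ⟨this, by positivity⟩
  have hS : (Multiset.range m).map b ≤ L :=
      (Multiset.le_iff_subset (h.nodup_edgeSummand_of_isCycle htf hc)).2 fun d hd => by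
    obtain ⟨t, ht, rfl⟩ := Multiset.mem_map.1 hd
    exact hb t (Multiset.mem_range.1 ht)
  have hL' := hL.tsub_add hS (S' := (Multiset.range m).map b') (fun d hd => by
      obtain ⟨t, ht, rfl⟩ := Multiset.mem_map.1 hd
      have := hb'pos t (Multiset.mem_range.1 ht)
      exact pairVec_nonneg this.1.le this.2.le)
    (by simp) (by
      simp only [Multiset.map_map, Function.comp_def]
      refine hsum.trans (sum_congr rfl fun t ht => ?_)
      have hbt : b t = pairVec (s t) (s (t + 1)) (x t) (y t) :=
        h.edgeSummand_eq_pairVec htf (hadj t (mem_range.1 ht))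
      rw [hbt])
  refine ⟨_, fun heq => ?_, hL'⟩
  have hne := (hadj 0 hm).ne
  have hmem : b' 0 ∈ L := heq ▸ Multiset.mem_add.2
    (Or.inr (Multiset.mem_map_of_mem _ (Multiset.mem_range.2 hm)))
  have hb'0 : b' 0 = b 0 := h.eq_edgeSummand htf hM hne hmem <| by
    simp only [b', pairVec_apply_left hne, pairVec_apply_right hne]
    exact mul_pos (hb'pos 0 hm).1 (hb'pos 0 hm).2
  have := congrFun hb'0 (s 0)
  simp only [b', pairVec_apply_left hne] at this
  exact (hxx' 0 hm).ne' this

end Cycle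

end

/-- If `A` is irreducible completely positive with triangle free graph and `M(A)` is
nonsingular, then `A` has at least two distinct minimal CP factorizations. -/
theorem stmt_10 (n : ℕ) (hn : 2 ≤ n) (A : Matrix (Fin n) (Fin n) ℝ)
    (hCP : IsCP A) (hirr : (matGraph A).Connected) (htf : (matGraph A).CliqueFree 3)
    (hns : (compMatrix A).det ≠ 0) :
    ∃ L₁ L₂ : Multiset (Fin n → ℝ), L₁ ≠ L₂ ∧ IsMinCPRep A L₁ ∧ IsMinCPRep A L₂ := by
  obtain ⟨L, hL⟩ := exists_isMinCPRep hCP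
  by_cases hM : HasOverlappingPair L
  · exact hL.exists_ne_of_hasOverlappingPair hM
  have h := hL.1.isCPDecomp
  by_cases hbal : ∀ (v : Fin n) (c : (matGraph A).Walk v v), c.IsCycle →
      walkProd (edgeRatio L) c = 1
  · obtain ⟨z, hz, hzbal⟩ := h.exists_balancing hirr htf hM
      (fun d hd => h.exists_mul_pos hn hirr htf hM hd (hL.1.2.1 d hd)) hbal
    exact absurd (h.det_compMatrix_eq_zero hz hzbal) hns
  push Not at hbal
  obtain ⟨v, c, hc, hc1⟩ := hbal
  obtain ⟨c', hc', hlt⟩ := exists_isCycle_walkProd_lt_one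
    (fun _ _ hab => h.edgeRatio_mul_edgeRatio htf hM hab) (fun _ _ hab => h.edgeRatio_pos hab)
    hc hc1
  obtain ⟨L', hne, hL'⟩ := hL.exists_ne_of_walkProd_lt_one htf hM hc' hlt
  exact ⟨L', L, hne, hL', hL⟩
end

section
/- Let A ∈ CP_n have a unique CP representation A = Σ_{i=1}^k b_i b_i^T. Then the minimal face of CP_n containing A is the polyhedral cone cone{ b_i b_i^T : 1 ≤ i ≤ k }. -/
open Matrix

/-- A face of the cone `CP_n`: a subcone `F` such that `X, Y ∈ CP_n` and `X + Y ∈ F`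
imply `X, Y ∈ F`. -/
def IsFaceCP (n : ℕ) (F : Set (Matrix (Fin n) (Fin n) ℝ)) : Prop :=
  (∀ X ∈ F, IsCP X) ∧
  (∀ X ∈ F, ∀ c : ℝ, 0 ≤ c → c • X ∈ F) ∧
  (∀ X ∈ F, ∀ Y ∈ F, X + Y ∈ F) ∧
  (∀ X Y : Matrix (Fin n) (Fin n) ℝ, IsCP X → IsCP Y → X + Y ∈ F → X ∈ F ∧ Y ∈ F)


/-!
Merging parallel summands (`v vᵀ + (a v)(a v)ᵀ = (1 + a²) v vᵀ`) turns any sum of outer products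
of nonnegative vectors into a CP representation. Hence if `X + Y = A` with `X, Y` completely
positive, the summands of `X` together with those of `Y` merge into a CP representation of `A`,
which by uniqueness is `{bᵢ}`: every summand of `X` is parallel to some `bᵢ`, so `X` lies in
`K = cone{bᵢ bᵢᵀ}`. Since `A - t Z` is CP for every `Z ∈ K` and small `t > 0`, this makes `K` a
face; conversely every face containing `A = bᵢ bᵢᵀ + ∑_{j ≠ i} bⱼ bⱼᵀ` contains each `bᵢ bᵢᵀ`.
-/

theorem Multiset.pairwise_cons_iff {α : Type*} {r : α → α → Prop} [Std.Symm r] {a : α}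
    {s : Multiset α} : (a ::ₘ s).Pairwise r ↔ (∀ b ∈ s, r a b) ∧ s.Pairwise r := by
  induction s using Quotient.inductionOn
  simp only [Multiset.quot_mk_to_coe, Multiset.cons_coe, Multiset.pairwise_coe_iff_pairwise,
    List.pairwise_cons, Multiset.mem_coe]

section CPRepresentation

variable {n : ℕ}

theorem vecMulVec_smul_self {R m : Type*} [CommSemiring R] (c : R) (u : m → R) :
    vecMulVec (c • u) (c • u) = (c * c) • vecMulVec u u := by
  rw [smul_vecMulVec, vecMulVec_smul, smul_smul]

instance LinearIndependent.pair_symm {R M : Type*} [Ring R] [AddCommGroup M] [Module R M] :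
    Std.Symm fun x y : M => LinearIndependent R ![x, y] :=
  ⟨fun _ _ => LinearIndependent.pair_symm_iff.mp⟩

theorem LinearIndependent.pair_smul_left_iff {K V : Type*} [Field K] [AddCommGroup V]
    [Module K V] {x y : V} {c : K} (hc : c ≠ 0) :
    LinearIndependent K ![c • x, y] ↔ LinearIndependent K ![x, y] := by
  simpa using LinearIndependent.pair_smul_smul_iff (x := x) (y := y) hc.isUnit isUnit_one

theorem IsCPRep.exists_add_vecMulVec {A : Matrix (Fin n) (Fin n) ℝ} {L : Multiset (Fin n → ℝ)}
    (hL : IsCPRep A L) {u : Fin n → ℝ} (hu : 0 ≤ u) :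
    ∃ L', IsCPRep (vecMulVec u u + A) L' ∧ (u ≠ 0 → ∃ w ∈ L', u ∈ ℝ ∙ w) ∧
      ∀ v ∈ L, ∃ w ∈ L', v ∈ ℝ ∙ w := by
  obtain ⟨hL0, hLne, hLpair, hLsum⟩ := hL
  by_cases hu0 : u = 0
  · subst hu0
    refine ⟨L, ⟨hL0, hLne, hLpair, by simpa using hLsum⟩, fun h => (h rfl).elim,
      fun v hv => ⟨v, hv, Submodule.mem_span_singleton_self v⟩⟩
  by_cases hind : ∀ v ∈ L, LinearIndependent ℝ ![u, v]
  · refine ⟨u ::ₘ L, ⟨?_, ?_, ?_, ?_⟩, fun _ => ⟨u, Multiset.mem_cons_self u L,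
      Submodule.mem_span_singleton_self u⟩, fun v hv => ⟨v, Multiset.mem_cons_of_mem hv,
      Submodule.mem_span_singleton_self v⟩⟩
    · simpa [Multiset.forall_mem_cons] using ⟨hu, hL0⟩
    · simpa [Multiset.forall_mem_cons] using ⟨hu0, hLne⟩
    · exact Multiset.pairwise_cons_iff.2 ⟨hind, hLpair⟩
    · simp [hLsum]
  push Not at hind
  obtain ⟨v, hvL, hdep⟩ := hind
  have hv0 : v ≠ 0 := hLne v hvL
  obtain ⟨a, rfl⟩ : ∃ a : ℝ, a • v = u := by
    simpa [LinearIndependent.pair_iff' hv0] using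
      mt LinearIndependent.pair_symm_iff.mp hdep
  obtain ⟨L₀, rfl⟩ := Multiset.exists_cons_of_mem hvL
  obtain ⟨hvL₀, hL₀pair⟩ := Multiset.pairwise_cons_iff.1 hLpair
  set s := √(1 + a * a)
  have hs : 0 < s := Real.sqrt_pos.2 (add_pos_of_pos_of_nonneg one_pos (mul_self_nonneg a))
  have hss : s * s = 1 + a * a := Real.mul_self_sqrt (add_nonneg zero_le_one (mul_self_nonneg a))
  have hspan : ℝ ∙ (s • v) = ℝ ∙ v := Submodule.span_singleton_smul_eq hs.ne'.isUnit v
  refine ⟨(s • v) ::ₘ L₀, ⟨?_, ?_, ?_, ?_⟩, fun _ => ⟨s • v, Multiset.mem_cons_self _ _, ?_⟩, ?_⟩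
  · refine Multiset.forall_mem_cons.2 ⟨fun i => mul_nonneg hs.le (hL0 v hvL i), ?_⟩
    exact fun w hw => hL0 w (Multiset.mem_cons_of_mem hw)
  · exact Multiset.forall_mem_cons.2
      ⟨smul_ne_zero hs.ne' hv0, fun w hw => hLne w (Multiset.mem_cons_of_mem hw)⟩
  · exact Multiset.pairwise_cons_iff.2
      ⟨fun w hw => (LinearIndependent.pair_smul_left_iff hs.ne').2 (hvL₀ w hw), hL₀pair⟩
  · rw [← hLsum, Multiset.map_cons, Multiset.sum_cons, Multiset.map_cons, Multiset.sum_cons,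
      vecMulVec_smul_self, vecMulVec_smul_self, hss, add_smul, one_smul, add_assoc, add_left_comm]
  · rw [hspan]
    exact Submodule.smul_mem _ a (Submodule.mem_span_singleton_self v)
  · intro w hw
    rcases Multiset.mem_cons.1 hw with rfl | hw
    · exact ⟨s • w, Multiset.mem_cons_self _ _, hspan ▸ Submodule.mem_span_singleton_self w⟩
    · exact ⟨w, Multiset.mem_cons_of_mem hw, Submodule.mem_span_singleton_self w⟩

theorem exists_isCPRep_of_nonneg (M : Multiset (Fin n → ℝ)) (hM : ∀ v ∈ M, 0 ≤ v) :
    ∃ L, IsCPRep (M.map fun v => vecMulVec v v).sum L ∧ ∀ v ∈ M, v ≠ 0 → ∃ w ∈ L, v ∈ ℝ ∙ w := by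
  induction M using Multiset.induction_on with
  | empty => exact ⟨0, ⟨by simp, by simp, Multiset.pairwise_zero _, by simp⟩, by simp⟩
  | cons u M ih =>
    obtain ⟨hu, hM⟩ := Multiset.forall_mem_cons.1 hM
    obtain ⟨L, hL, hML⟩ := ih hM
    obtain ⟨L', hL', huL', hLL'⟩ := hL.exists_add_vecMulVec hu
    refine ⟨L', by simpa using hL', Multiset.forall_mem_cons.2 ⟨huL', fun v hv hv0 => ?_⟩⟩
    obtain ⟨w, hw, hvw⟩ := hML v hv hv0
    obtain ⟨w', hw', hww'⟩ := hLL' w hw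
    exact ⟨w', hw', Submodule.mem_span_singleton_trans hvw hww'⟩

theorem isCP_iff {X : Matrix (Fin n) (Fin n) ℝ} :
    IsCP X ↔ ∃ M : Multiset (Fin n → ℝ), (∀ v ∈ M, 0 ≤ v) ∧
      (M.map fun v => vecMulVec v v).sum = X :=
  ⟨fun ⟨L, hL0, _, _, hLX⟩ => ⟨L, fun v hv i => hL0 v hv i, hLX⟩,
    fun ⟨M, hM, hMX⟩ => hMX ▸ (exists_isCPRep_of_nonneg M hM).imp fun _ h => h.1⟩

theorem isCP_zero : IsCP (0 : Matrix (Fin n) (Fin n) ℝ) :=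
  isCP_iff.2 ⟨0, by simp, by simp⟩

theorem isCP_vecMulVec_self {u : Fin n → ℝ} (hu : 0 ≤ u) : IsCP (vecMulVec u u) :=
  isCP_iff.2 ⟨{u}, by simpa using hu, by simp⟩

theorem IsCP.add {X Y : Matrix (Fin n) (Fin n) ℝ} (hX : IsCP X) (hY : IsCP Y) : IsCP (X + Y) := by
  obtain ⟨MX, hMX, rfl⟩ := isCP_iff.1 hX
  obtain ⟨MY, hMY, rfl⟩ := isCP_iff.1 hY
  exact isCP_iff.2 ⟨MX + MY, by simpa [or_imp, forall_and] using ⟨hMX, hMY⟩, by simp⟩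

theorem IsCP.smul {X : Matrix (Fin n) (Fin n) ℝ} (hX : IsCP X) {c : ℝ} (hc : 0 ≤ c) :
    IsCP (c • X) := by
  obtain ⟨M, hM, rfl⟩ := isCP_iff.1 hX
  refine isCP_iff.2
    ⟨M.map (√c • ·), by simpa using fun v hv => smul_nonneg (Real.sqrt_nonneg c) (hM v hv), ?_⟩
  simp [Multiset.smul_sum, smul_smul, Real.mul_self_sqrt hc]

theorem IsCP.sum {ι : Type*} {s : Finset ι} {X : ι → Matrix (Fin n) (Fin n) ℝ}
    (hX : ∀ i ∈ s, IsCP (X i)) : IsCP (∑ i ∈ s, X i) :=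
  Finset.sum_induction X IsCP (fun _ _ => IsCP.add) isCP_zero hX

end CPRepresentation

section RankOneCone

variable {n : ℕ} {ι : Type*}

def rankOneCone (b : ι → Fin n → ℝ) : PointedCone ℝ (Matrix (Fin n) (Fin n) ℝ) :=
  PointedCone.hull ℝ (Set.range fun i => vecMulVec (b i) (b i))

theorem mem_rankOneCone_iff [Fintype ι] {b : ι → Fin n → ℝ} {X : Matrix (Fin n) (Fin n) ℝ} :
    X ∈ rankOneCone b ↔
      ∃ c : ι → ℝ, (∀ i, 0 ≤ c i) ∧ X = ∑ i, c i • vecMulVec (b i) (b i) := by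
  rw [rankOneCone, PointedCone.hull, Submodule.mem_span_range_iff_exists_fun]
  constructor
  · rintro ⟨c, rfl⟩
    exact ⟨fun i => c i, fun i => (c i).2, rfl⟩
  · rintro ⟨c, hc, rfl⟩
    exact ⟨fun i => ⟨c i, hc i⟩, rfl⟩

theorem vecMulVec_mem_rankOneCone (b : ι → Fin n → ℝ) (i : ι) :
    vecMulVec (b i) (b i) ∈ rankOneCone b :=
  PointedCone.subset_hull ⟨i, rfl⟩

theorem vecMulVec_mem_rankOneCone_of_mem_span {b : ι → Fin n → ℝ} {i : ι} {v : Fin n → ℝ}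
    (hv : v ∈ ℝ ∙ b i) : vecMulVec v v ∈ rankOneCone b := by
  obtain ⟨a, rfl⟩ := Submodule.mem_span_singleton.1 hv
  rw [vecMulVec_smul_self]
  exact PointedCone.smul_mem _ (mul_self_nonneg a) (vecMulVec_mem_rankOneCone b i)

theorem isCP_of_mem_rankOneCone {b : ι → Fin n → ℝ} (hb : ∀ i, 0 ≤ b i)
    {X : Matrix (Fin n) (Fin n) ℝ} (hX : X ∈ rankOneCone b) : IsCP X := by
  induction hX using Submodule.span_induction with
  | mem _ h => obtain ⟨i, rfl⟩ := h; exact isCP_vecMulVec_self (hb i)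
  | zero => exact isCP_zero
  | add _ _ _ _ hX hY => exact hX.add hY
  | smul c _ _ hX => exact hX.smul c.2

theorem IsFaceCP.rankOneCone_subset [Fintype ι] {F : Set (Matrix (Fin n) (Fin n) ℝ)}
    (hF : IsFaceCP n F) {b : ι → Fin n → ℝ} (hb : ∀ i, 0 ≤ b i) {A : Matrix (Fin n) (Fin n) ℝ}
    (hA : ∑ i, vecMulVec (b i) (b i) = A) (hAF : A ∈ F) : (rankOneCone b : Set _) ⊆ F := by
  classical
  obtain ⟨-, hF_smul, hF_add, hF_face⟩ := hF
  have hbF : ∀ i, vecMulVec (b i) (b i) ∈ F := fun i =>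
    (hF_face _ _ (isCP_vecMulVec_self (hb i))
      (IsCP.sum (s := Finset.univ.erase i) fun j _ => isCP_vecMulVec_self (hb j))
      (by rwa [Finset.add_sum_erase _ (fun j => vecMulVec (b j) (b j)) (Finset.mem_univ i),
        hA])).1
  intro X hX
  induction hX using Submodule.span_induction with
  | mem _ h => obtain ⟨i, rfl⟩ := h; exact hbF i
  | zero => simpa using hF_smul A hAF 0 le_rfl
  | add X Y _ _ hX hY => exact hF_add X hX Y hY
  | smul c X _ hX => exact hF_smul X hX c c.2

theorem IsCP.mem_rankOneCone_of_add_eq [Fintype ι] {b : ι → Fin n → ℝ}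
    {A : Matrix (Fin n) (Fin n) ℝ} (huniq : ∀ L, IsCPRep A L → L = Finset.univ.val.map b)
    {X Y : Matrix (Fin n) (Fin n) ℝ} (hX : IsCP X) (hY : IsCP Y) (hXY : X + Y = A) :
    X ∈ rankOneCone b := by
  obtain ⟨MX, hMX, rfl⟩ := isCP_iff.1 hX
  obtain ⟨MY, hMY, rfl⟩ := isCP_iff.1 hY
  obtain ⟨L, hL, hML⟩ :=
    exists_isCPRep_of_nonneg (MX + MY) (by simpa [or_imp, forall_and] using ⟨hMX, hMY⟩)
  rw [Multiset.map_add, Multiset.sum_add, hXY] at hL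
  obtain rfl := huniq L hL
  refine multiset_sum_mem _ fun _ hZ => ?_
  obtain ⟨v, hv, rfl⟩ := Multiset.mem_map.1 hZ
  by_cases hv0 : v = 0
  · simp [hv0]
  obtain ⟨w, hw, hvw⟩ := hML v (Multiset.mem_add.2 (Or.inl hv)) hv0
  obtain ⟨i, -, rfl⟩ := Multiset.mem_map.1 hw
  exact vecMulVec_mem_rankOneCone_of_mem_span hvw

/-- If `X + Y = ∑ cᵢ bᵢ bᵢᵀ`, then `A = t X + (t Y + ∑ (1 - t cᵢ) bᵢ bᵢᵀ)` splits `A` into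
CP matrices as soon as every `t cᵢ ≤ 1`. -/
theorem IsCP.mem_rankOneCone_of_add_mem [Fintype ι] {b : ι → Fin n → ℝ} (hb : ∀ i, 0 ≤ b i)
    {A : Matrix (Fin n) (Fin n) ℝ} (hA : ∑ i, vecMulVec (b i) (b i) = A)
    (huniq : ∀ L, IsCPRep A L → L = Finset.univ.val.map b)
    {X Y : Matrix (Fin n) (Fin n) ℝ} (hX : IsCP X) (hY : IsCP Y) (hXY : X + Y ∈ rankOneCone b) :
    X ∈ rankOneCone b := by
  obtain ⟨c, hc, hXYc⟩ := mem_rankOneCone_iff.1 hXY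
  set t := (1 + ∑ i, c i)⁻¹
  have hsum : 0 < 1 + ∑ i, c i :=
    add_pos_of_pos_of_nonneg one_pos (Finset.sum_nonneg fun i _ => hc i)
  have ht : 0 < t := inv_pos.2 hsum
  have htc : ∀ i, 0 ≤ 1 - t * c i := fun i => by
    rw [sub_nonneg, inv_mul_le_iff₀ hsum, mul_one]
    linarith [Finset.single_le_sum (fun j _ => hc j) (Finset.mem_univ i)]
  have hZ : IsCP (∑ i, (1 - t * c i) • vecMulVec (b i) (b i)) :=
    IsCP.sum fun i _ => (isCP_vecMulVec_self (hb i)).smul (htc i)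
  refine (PointedCone.smul_mem_iff _ ht).1 <|
    (hX.smul ht.le).mem_rankOneCone_of_add_eq huniq ((hY.smul ht.le).add hZ) ?_
  rw [← add_assoc, ← smul_add, hXYc, Finset.smul_sum, ← Finset.sum_add_distrib, ← hA]
  refine Finset.sum_congr rfl fun i _ => ?_
  rw [smul_smul, ← add_smul, add_sub_cancel, one_smul]

theorem isFaceCP_rankOneCone [Fintype ι] {b : ι → Fin n → ℝ} (hb : ∀ i, 0 ≤ b i)
    {A : Matrix (Fin n) (Fin n) ℝ} (hA : ∑ i, vecMulVec (b i) (b i) = A)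
    (huniq : ∀ L, IsCPRep A L → L = Finset.univ.val.map b) :
    IsFaceCP n (rankOneCone b) :=
  ⟨fun _ => isCP_of_mem_rankOneCone hb, fun _ hX _ hc => PointedCone.smul_mem _ hc hX,
    fun _ hX _ hY => add_mem hX hY, fun X Y hX hY hXY =>
      ⟨hX.mem_rankOneCone_of_add_mem hb hA huniq hY hXY,
        hY.mem_rankOneCone_of_add_mem hb hA huniq hX (add_comm X Y ▸ hXY)⟩⟩

end RankOneCone

/-- If `A` has a unique CP representation `A = Σᵢ bᵢbᵢᵀ`, then the minimal face of
`CP_n` containing `A` is the polyhedral cone generated by the `bᵢbᵢᵀ`. -/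
theorem stmt_19 (n k : ℕ) (A : Matrix (Fin n) (Fin n) ℝ) (b : Fin k → (Fin n → ℝ))
    (hrep : IsCPRep A (Multiset.map b (Finset.univ.val : Multiset (Fin k))))
    (huniq : ∀ L, IsCPRep A L → L = Multiset.map b (Finset.univ.val : Multiset (Fin k))) :
    ⋂₀ {F | IsFaceCP n F ∧ A ∈ F} =
      {X | ∃ c : Fin k → ℝ, (∀ i, 0 ≤ c i) ∧
        X = ∑ i, c i • vecMulVec (b i) (b i)} := by
  obtain ⟨hb, -, -, hA⟩ := hrep
  replace hb : ∀ i, 0 ≤ b i := fun i =>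
    hb (b i) (Multiset.mem_map_of_mem b (Finset.mem_univ_val i))
  replace hA : ∑ i, vecMulVec (b i) (b i) = A := by rw [← hA, Multiset.map_map]; rfl
  have hAmem : A ∈ rankOneCone b := hA ▸ sum_mem fun i _ => vecMulVec_mem_rankOneCone b i
  have hface : (rankOneCone b : Set _) ∈ {F | IsFaceCP n F ∧ A ∈ F} :=
    ⟨isFaceCP_rankOneCone hb hA huniq, hAmem⟩
  have hmin : ⋂₀ {F | IsFaceCP n F ∧ A ∈ F} = rankOneCone b :=
    (Set.sInter_subset_of_mem hface).antisymm
      (Set.subset_sInter fun F hF => hF.1.rankOneCone_subset hb hA hF.2)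
  rw [hmin]
  exact Set.ext fun X => mem_rankOneCone_iff
end
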